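/- arXiv:1510.07442 — 10 statements merged into one kernel-verified Lean document; each statement's English description precedes it below -/
import Mathlib

section
/- Let ‖·‖_X be a norm on ℝ² with B_E ⊆ B_X. For x with ‖x‖_X = 1 and τ(x) a point of the Euclidean unit sphere on a tangent line to S_E through x, one has ‖t·x + (1-t)·τ(x)‖_X ≥ 1 for all t > 1. -/
/-!
Write `y = t • x + (1 - t) • τ`. Then `x = t⁻¹ • y + (1 - t⁻¹) • τ` is a convex combination of
`y` and `τ`, and `τ` lies on the Euclidean unit sphere, hence in `B_X`. Convexity of `‖·‖_X`
gives `1 = ‖x‖_X ≤ t⁻¹ ‖y‖_X + (1 - t⁻¹)`, i.e. `‖y‖_X ≥ 1`.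
-/

open Real
open scoped RealInnerProductSpace

theorem one_le_smul_add_one_sub_smul {E : Type*} [AddCommGroup E] [Module ℝ E] (N : E → ℝ)
    (hN_add : ∀ v w, N (v + w) ≤ N v + N w)
    (hN_smul : ∀ (a : ℝ) (w : E), N (a • w) = |a| * N w)
    {x τ : E} (hx : N x = 1) (hτ : N τ ≤ 1) {t : ℝ} (ht : 1 < t) :
    1 ≤ N (t • x + (1 - t) • τ) := by
  set y := t • x + (1 - t) • τ
  have ht0 : 0 < t := by linarith
  have hx_comb : x = t⁻¹ • y + (1 - t⁻¹) • τ := by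
    simp only [y]
    match_scalars
    · field_simp
    · field_simp
      ring
  have hcoef : 0 ≤ 1 - t⁻¹ := sub_nonneg.mpr (inv_le_one_of_one_le₀ ht.le)
  have hconv : 1 ≤ t⁻¹ * N y + (1 - t⁻¹) * N τ := calc
    1 = N (t⁻¹ • y + (1 - t⁻¹) • τ) := by rw [← hx_comb, hx]
    _ ≤ N (t⁻¹ • y) + N ((1 - t⁻¹) • τ) := hN_add _ _
    _ = t⁻¹ * N y + (1 - t⁻¹) * N τ := by
      rw [hN_smul, hN_smul, abs_of_pos (inv_pos.mpr ht0), abs_of_nonneg hcoef]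
  have : t⁻¹ ≤ t⁻¹ * N y := by nlinarith [mul_le_mul_of_nonneg_left hτ hcoef]
  rwa [le_mul_iff_one_le_right (inv_pos.mpr ht0)] at this

theorem norm_tangentPoint_eq_one {F : Type*} [NormedAddCommGroup F] [InnerProductSpace ℝ F]
    {x xp : F} (hxE : 1 ≤ ‖x‖) (hxp : ‖xp‖ = 1) (hperp : ⟪x, xp⟫ = 0) :
    ‖(‖x‖ ^ 2)⁻¹ • x + √(1 - (‖x‖ ^ 2)⁻¹) • xp‖ = 1 := by
  have hsq : 0 < ‖x‖ ^ 2 := by positivity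
  have hinv : (‖x‖ ^ 2)⁻¹ ≤ 1 := inv_le_one_of_one_le₀ (one_le_pow₀ hxE)
  have horth : ⟪(‖x‖ ^ 2)⁻¹ • x, √(1 - (‖x‖ ^ 2)⁻¹) • xp⟫ = 0 := by
    rw [real_inner_smul_left, real_inner_smul_right, hperp, mul_zero, mul_zero]
  rw [← pow_eq_one_iff_of_nonneg (norm_nonneg _) two_ne_zero, norm_add_sq_real, horth,
    mul_zero, add_zero, norm_smul, norm_smul, hxp, Real.norm_of_nonneg (inv_nonneg.mpr hsq.le),
    Real.norm_of_nonneg (Real.sqrt_nonneg _), mul_pow, mul_one, Real.sq_sqrt (sub_nonneg.mpr hinv)]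
  field_simp
  ring

theorem stmt3_general (N : EuclideanSpace ℝ (Fin 2) → ℝ)
    (hN_add : ∀ v w, N (v + w) ≤ N v + N w)
    (hN_smul : ∀ (a : ℝ) (w : EuclideanSpace ℝ (Fin 2)), N (a • w) = |a| * N w)
    (hNE : ∀ w, N w ≤ ‖w‖)
    (x xp : EuclideanSpace ℝ (Fin 2))
    (hxX : N x = 1) (hxE : 1 ≤ ‖x‖)
    (hxp : ‖xp‖ = 1) (hperp : ⟪x, xp⟫ = 0)
    (τ : EuclideanSpace ℝ (Fin 2))
    (hτ : τ = (‖x‖ ^ 2)⁻¹ • x + Real.sqrt (1 - (‖x‖ ^ 2)⁻¹) • xp) :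
    ∀ t : ℝ, 1 < t → 1 ≤ N (t • x + (1 - t) • τ) := by
  intro t ht
  have hτN : N τ ≤ 1 := (hNE τ).trans_eq (hτ ▸ norm_tangentPoint_eq_one hxE hxp hperp)
  exact one_le_smul_add_one_sub_smul N hN_add hN_smul hxX hτN ht

theorem stmt3 (N : EuclideanSpace ℝ (Fin 2) → ℝ)
    (hN_add : ∀ v w, N (v + w) ≤ N v + N w)
    (hN_smul : ∀ (a : ℝ) (w : EuclideanSpace ℝ (Fin 2)), N (a • w) = |a| * N w)
    (hN_def : ∀ w, N w = 0 → w = 0)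
    (hNE : ∀ w, N w ≤ ‖w‖)
    (x xp : EuclideanSpace ℝ (Fin 2))
    (hxX : N x = 1) (hxE : 1 ≤ ‖x‖)
    (hxp : ‖xp‖ = 1) (hperp : ⟪x, xp⟫ = 0)
    (τ : EuclideanSpace ℝ (Fin 2))
    (hτ : τ = (‖x‖ ^ 2)⁻¹ • x + Real.sqrt (1 - (‖x‖ ^ 2)⁻¹) • xp) :
    ∀ t : ℝ, 1 < t → 1 ≤ N (t • x + (1 - t) • τ) :=
  stmt3_general N hN_add hN_smul hNE x xp hxX hxE hxp hperp τ hτ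
end

section
/- Let ‖·‖_X be a norm on ℝ² whose unit ball contains the Euclidean unit ball. If x lies on both the X-unit sphere and the Euclidean unit sphere, then ⟨x, y⟩ ≤ 1 for every y on the X-unit sphere. -/
open Set Real
open scoped RealInnerProductSpace

theorem stmt4 (N : EuclideanSpace ℝ (Fin 2) → ℝ)
    (hN_add : ∀ v w, N (v + w) ≤ N v + N w)
    (hN_smul : ∀ (a : ℝ) (w : EuclideanSpace ℝ (Fin 2)), N (a • w) = |a| * N w)
    (hN_def : ∀ w, N w = 0 → w = 0)
    (hNE : ∀ w, N w ≤ ‖w‖)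
    (x y : EuclideanSpace ℝ (Fin 2))
    (hxX : N x = 1) (hxE : ‖x‖ = 1) (hyX : N y = 1) :
    ⟪x, y⟫ ≤ 1 := by
  by_contra h
  push_neg at h
  set c : ℝ := ⟪x, y⟫ with hc
  set K : ℝ := 1 - 2 * c + ‖y‖ ^ 2 with hK
  set M : ℝ := max K 1 with hM
  have hM1 : (1 : ℝ) ≤ M := le_max_right _ _
  have hM0 : (0 : ℝ) < M := lt_of_lt_of_le one_pos hM1
  set t : ℝ := (c - 1) / M with ht
  have ht0 : 0 < t := div_pos (by linarith) hM0
  have htM : t * M = c - 1 := div_mul_cancel₀ _ (ne_of_gt hM0)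
  have hKM : K ≤ M := le_max_left _ _
  -- norm squared computation
  have hsq : ‖(1 + t) • x - t • y‖ ^ 2 = (1 + t) ^ 2 - 2 * ((1 + t) * t) * c + t ^ 2 * ‖y‖ ^ 2 := by
    rw [norm_sub_sq_real]
    rw [norm_smul, norm_smul, real_inner_smul_left, real_inner_smul_right]
    rw [hxE]
    rw [Real.norm_eq_abs, Real.norm_eq_abs, abs_of_pos (by linarith : (0:ℝ) < 1 + t),
      abs_of_pos ht0]
    ring
  have hlt1 : ‖(1 + t) • x - t • y‖ ^ 2 < 1 := by
    rw [hsq]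
    have h1 : (1 + t) ^ 2 - 2 * ((1 + t) * t) * c + t ^ 2 * ‖y‖ ^ 2
        = 1 + 2 * t * (1 - c) + t ^ 2 * K := by rw [hK]; ring
    rw [h1]
    have h2 : t ^ 2 * K ≤ t * (c - 1) := by
      calc t ^ 2 * K ≤ t ^ 2 * M := by nlinarith
        _ = t * (t * M) := by ring
        _ = t * (c - 1) := by rw [htM]
    nlinarith
  have hnlt : ‖(1 + t) • x - t • y‖ < 1 := by
    nlinarith [norm_nonneg ((1 + t) • x - t • y)]
  have hNlt : N ((1 + t) • x - t • y) < 1 := lt_of_le_of_lt (hNE _) hnlt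
  have hdecomp : (1 + t) • x = ((1 + t) • x - t • y) + t • y := by abel
  have h3 := hN_add ((1 + t) • x - t • y) (t • y)
  rw [← hdecomp] at h3
  rw [hN_smul, hN_smul, hxX, hyX, abs_of_pos (by linarith : (0:ℝ) < 1 + t),
    abs_of_pos ht0] at h3
  linarith
end

section
/- Let ‖·‖_X be a norm on ℝ² with B_E ⊆ B_X ⊆ K·B_E for some K ≥ 1. If x, y lie on the X-unit sphere and the angle between x and y (i.e. arccos(⟨x,y⟩/(‖x‖_E‖y‖_E))) is at most arccos(1/K), then ‖x - y‖_E ≤ K² · ‖ x/‖x‖_E − y/‖y‖_E ‖_E. -/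
open Set Real
open scoped RealInnerProductSpace

set_option maxHeartbeats 1600000 in
/-- Key scalar inequality. -/
lemma stmt5_key (K a b p : ℝ) (hK : 1 ≤ K) (ha1 : 1 ≤ a) (haK : a ≤ K)
    (hb1 : 1 ≤ b) (hbK : b ≤ K) (hba : b ≤ a)
    (hcon : ∀ l : ℝ, 0 ≤ l → l ≤ 1 → (1 - l) ^ 2 ≤ b ^ 2 - 2 * l * p + l ^ 2 * a ^ 2) :
    a * b * (a ^ 2 + b ^ 2 - 2 * p) ≤ K ^ 4 * (2 * a * b - 2 * p) := by
  have hmab : a * b ≤ K ^ 2 := by nlinarith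
  by_cases hab : a * b ≤ 1
  · -- then a = b = 1
    have ha : a = 1 := by nlinarith
    have hb : b = 1 := by nlinarith
    have hp := hcon 1 (by norm_num) (by norm_num)
    subst ha; subst hb
    have hK2 : 1 ≤ K ^ 2 := by nlinarith
    have hK4 : 1 ≤ K ^ 4 := by nlinarith
    nlinarith
  · push_neg at hab
    have hK1 : 1 < K := by nlinarith
    have ha1' : 1 < a := by nlinarith
    obtain ⟨A, hAdef⟩ : ∃ t : ℝ, t = (a ^ 2 - 1) * (K ^ 4 - a * b) := ⟨_, rfl⟩
    obtain ⟨D, hDdef⟩ : ∃ t : ℝ, t = 2 * K ^ 4 * (a * b - 1) - a * b * (a ^ 2 + b ^ 2 - 2) := ⟨_, rfl⟩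
    have hK2' : K ^ 2 < K ^ 4 := by nlinarith [sq_nonneg K, sq_nonneg (K - 1), sq_nonneg (K + 1), sq_nonneg (K ^ 2 - 1)]
    have hm0 : 0 < K ^ 4 - a * b := by nlinarith
    have hm2 : 0 ≤ K ^ 4 - (a * b) ^ 2 := by nlinarith [sq_nonneg (K ^ 2 - a * b)]
    have hA : 0 < A := by
      have h' : 0 < a ^ 2 - 1 := by nlinarith
      rw [hAdef]; exact mul_pos h' hm0
    have hqr : (a - b) ^ 2 ≤ (a * b - 1) ^ 2 := by
      nlinarith [mul_nonneg (by linarith : (0:ℝ) ≤ a + 1) (by linarith : (0:ℝ) ≤ b - 1)]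
    have hs2 : 0 < 2 * K ^ 4 - a * b - (a * b) ^ 2 := by nlinarith
    have hD : 0 < D := by
      have e : D = a * b * ((a * b - 1) ^ 2 - (a - b) ^ 2)
          + (a * b - 1) * (2 * K ^ 4 - a * b - (a * b) ^ 2) := by rw [hDdef]; ring
      have t1 : 0 ≤ a * b * ((a * b - 1) ^ 2 - (a - b) ^ 2) :=
        mul_nonneg (by nlinarith) (sub_nonneg.mpr hqr)
      have t2 : 0 < (a * b - 1) * (2 * K ^ 4 - a * b - (a * b) ^ 2) :=
        mul_pos (by linarith) hs2
      linarith
    have hbb : b * b ≤ K ^ 2 := by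
      calc b * b ≤ K * K := mul_le_mul hbK hbK (by linarith) (by linarith)
        _ = K ^ 2 := by ring
    have h2k : 0 ≤ 2 * K ^ 4 - b * (a + b) := by
      have e : b * (a + b) = a * b + b * b := by ring
      rw [e]; linarith
    have hDA : D ≤ 2 * A := by
      have e : 2 * A - D = a * (a - b) * (2 * K ^ 4 - b * (a + b)) := by
        rw [hAdef, hDdef]; ring
      have t1 : 0 ≤ a * (a - b) * (2 * K ^ 4 - b * (a + b)) :=
        mul_nonneg (mul_nonneg (by linarith) (by linarith)) h2k
      linarith
    obtain ⟨l, hldef⟩ : ∃ t : ℝ, t = D / (2 * A) := ⟨_, rfl⟩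
    have h2A : 0 < 2 * A := by linarith
    have hl0 : 0 ≤ l := by rw [hldef]; exact le_of_lt (div_pos hD h2A)
    have hl1 : l ≤ 1 := by rw [hldef]; exact (div_le_one h2A).mpr hDA
    have hc := hcon l hl0 hl1
    -- multiply constraint by (2A)^2
    have hE1 : (2 * A - D) ^ 2 ≤ (2 * A) ^ 2 * b ^ 2 - 2 * D * (2 * A) * p + D ^ 2 * a ^ 2 := by
      have h1 : (1 - l) ^ 2 * (2 * A) ^ 2 ≤ (b ^ 2 - 2 * l * p + l ^ 2 * a ^ 2) * (2 * A) ^ 2 :=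
        mul_le_mul_of_nonneg_right hc (by positivity)
      have hl : l * (2 * A) = D := by rw [hldef]; exact div_mul_cancel₀ D (ne_of_gt h2A)
      calc (2 * A - D) ^ 2 = (1 - l) ^ 2 * (2 * A) ^ 2 := by rw [← hl]; ring
        _ ≤ (b ^ 2 - 2 * l * p + l ^ 2 * a ^ 2) * (2 * A) ^ 2 := h1
        _ = (2 * A) ^ 2 * b ^ 2 - 2 * (l * (2 * A)) * (2 * A) * p + (l * (2 * A)) ^ 2 * a ^ 2 := by ring
        _ = (2 * A) ^ 2 * b ^ 2 - 2 * D * (2 * A) * p + D ^ 2 * a ^ 2 := by rw [hl]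
    -- master polynomial inequality D^2 ≥ 4 A C
    have hP : 4 * A * ((b ^ 2 - 1) * (K ^ 4 - a * b)) ≤ D ^ 2 := by
      have e : D ^ 2 - 4 * A * ((b ^ 2 - 1) * (K ^ 4 - a * b)) =
          (a * b * (a - b) ^ 2) ^ 2
          + 4 * ((K ^ 4 - a * b) * (a - b) ^ 2) * (K ^ 4 - (a * b) ^ 2) := by
        rw [hAdef, hDdef]; ring
      linarith [e, sq_nonneg (a * b * (a - b) ^ 2),
        mul_nonneg (mul_nonneg (mul_nonneg hm0.le (sq_nonneg (a - b))) hm2) (by norm_num : (0:ℝ) ≤ 4),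
        mul_nonneg (mul_nonneg hm0.le (sq_nonneg (a - b))) hm2]
    -- combine
    have hE2 : (K ^ 4 - a * b) * ((2 * A) ^ 2 * b ^ 2 + D ^ 2 * a ^ 2 - (2 * A - D) ^ 2)
        ≤ 2 * A * D * (D + 2 * (K ^ 4 - a * b)) := by
      have e : 2 * A * D * (D + 2 * (K ^ 4 - a * b))
          - (K ^ 4 - a * b) * ((2 * A) ^ 2 * b ^ 2 + D ^ 2 * a ^ 2 - (2 * A - D) ^ 2)
          = A * (D ^ 2 - 4 * A * ((b ^ 2 - 1) * (K ^ 4 - a * b))) := by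
        rw [hAdef]; ring
      linarith [e, mul_nonneg hA.le (sub_nonneg.mpr hP)]
    have hchain : 2 * A * D * (2 * p * (K ^ 4 - a * b)) ≤ 2 * A * D * (D + 2 * (K ^ 4 - a * b)) := by
      have h1 := mul_le_mul_of_nonneg_left hE1 hm0.le
      have e : 2 * A * D * (2 * p * (K ^ 4 - a * b)) =
          (K ^ 4 - a * b) * ((2 * A) ^ 2 * b ^ 2 + D ^ 2 * a ^ 2 - (2 * A - D) ^ 2)
          - ((K ^ 4 - a * b) * ((2 * A) ^ 2 * b ^ 2 - 2 * D * (2 * A) * p + D ^ 2 * a ^ 2)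
             - (K ^ 4 - a * b) * (2 * A - D) ^ 2) := by ring
      linarith [e, h1, hE2]
    have hfin : 2 * p * (K ^ 4 - a * b) ≤ D + 2 * (K ^ 4 - a * b) :=
      le_of_mul_le_mul_left hchain (by positivity)
    rw [hDdef] at hfin
    nlinarith [hfin]

theorem stmt5 (N : EuclideanSpace ℝ (Fin 2) → ℝ)
    (hN_add : ∀ v w, N (v + w) ≤ N v + N w)
    (hN_smul : ∀ (a : ℝ) (w : EuclideanSpace ℝ (Fin 2)), N (a • w) = |a| * N w)
    (hN_def : ∀ w, N w = 0 → w = 0)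
    (hNE : ∀ w, N w ≤ ‖w‖)
    (K : ℝ) (hK : 1 ≤ K) (hKE : ∀ w, ‖w‖ ≤ K * N w)
    (x y : EuclideanSpace ℝ (Fin 2))
    (hxX : N x = 1) (hyX : N y = 1)
    (hangle : Real.arccos (⟪x, y⟫ / (‖x‖ * ‖y‖)) ≤ Real.arccos K⁻¹) :
    ‖x - y‖ ≤ K ^ 2 * ‖‖x‖⁻¹ • x - ‖y‖⁻¹ • y‖ := by
  set a : ℝ := ‖x‖ with hadef
  set b : ℝ := ‖y‖ with hbdef
  set p : ℝ := ⟪x, y⟫ with hpdef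
  have ha1 : 1 ≤ a := by have := hNE x; rw [hxX] at this; exact this
  have hb1 : 1 ≤ b := by have := hNE y; rw [hyX] at this; exact this
  have haK : a ≤ K := by have := hKE x; rw [hxX] at this; linarith
  have hbK : b ≤ K := by have := hKE y; rw [hyX] at this; linarith
  have ha0 : 0 < a := by linarith
  have hb0 : 0 < b := by linarith
  -- the convexity constraint, both ways
  have hcon : ∀ (u v : EuclideanSpace ℝ (Fin 2)), N u = 1 → N v = 1 →
      ∀ l : ℝ, 0 ≤ l → l ≤ 1 → (1 - l) ^ 2 ≤ ‖v‖ ^ 2 - 2 * l * ⟪u, v⟫ + l ^ 2 * ‖u‖ ^ 2 := by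
    intro u v hu hv l hl0 hl1
    have h1 : N v ≤ N (v - l • u) + N (l • u) := by
      have := hN_add (v - l • u) (l • u)
      simpa using this
    have h2 : N (l • u) = l := by rw [hN_smul, hu, abs_of_nonneg hl0, mul_one]
    have h3 : 1 - l ≤ ‖v - l • u‖ := by
      have := hNE (v - l • u)
      rw [hv, h2] at h1
      linarith
    have h4 : (1 - l) ^ 2 ≤ ‖v - l • u‖ ^ 2 := by
      have := norm_nonneg (v - l • u)
      nlinarith
    have h5 : ‖v - l • u‖ ^ 2 = ‖v‖ ^ 2 - 2 * l * ⟪u, v⟫ + l ^ 2 * ‖u‖ ^ 2 := by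
      rw [@norm_sub_sq_real, real_inner_smul_right, norm_smul, real_inner_comm]
      rw [mul_pow]
      simp [abs_of_nonneg hl0]
      ring
    linarith [h5 ▸ h4]
  -- scalar inequality
  have hscal : a * b * (a ^ 2 + b ^ 2 - 2 * p) ≤ K ^ 4 * (2 * a * b - 2 * p) := by
    rcases le_total b a with hba | hba
    · exact stmt5_key K a b p hK ha1 haK hb1 hbK hba (fun l h0 h1 => hcon x y hxX hyX l h0 h1)
    · have := stmt5_key K b a p hK hb1 hbK ha1 haK hba (fun l h0 h1 => by
        have := hcon y x hyX hxX l h0 h1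
        rwa [real_inner_comm] at this)
      nlinarith [this]
  -- expand norms
  have hxy : ‖x - y‖ ^ 2 = a ^ 2 + b ^ 2 - 2 * p := by
    rw [@norm_sub_sq_real]; ring
  have huv : ‖a⁻¹ • x - b⁻¹ • y‖ ^ 2 = 2 - 2 * (a⁻¹ * b⁻¹ * p) := by
    rw [@norm_sub_sq_real, real_inner_smul_left, real_inner_smul_right, norm_smul, norm_smul]
    rw [Real.norm_eq_abs, Real.norm_eq_abs, abs_of_pos (inv_pos.mpr ha0), abs_of_pos (inv_pos.mpr hb0)]
    rw [mul_pow, mul_pow, ← hadef, ← hbdef, ← hpdef]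
    field_simp
    ring
  have hsq : ‖x - y‖ ^ 2 ≤ (K ^ 2 * ‖a⁻¹ • x - b⁻¹ • y‖) ^ 2 := by
    rw [hxy, mul_pow, huv]
    have hab : 0 < a * b := mul_pos ha0 hb0
    rw [show (K ^ 2) ^ 2 = K ^ 4 by ring]
    have hinv : (2 : ℝ) - 2 * (a⁻¹ * b⁻¹ * p) = (2 * a * b - 2 * p) / (a * b) := by
      field_simp
    rw [hinv, mul_div_assoc' (K ^ 4), le_div_iff₀ hab]
    nlinarith [hscal]
  have h1 : 0 ≤ K ^ 2 * ‖a⁻¹ • x - b⁻¹ • y‖ := by positivity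
  nlinarith [hsq, norm_nonneg (x - y), h1]
end

section
/- Let ‖·‖_X be a norm on ℝ² whose closed unit ball contains the Euclidean closed unit ball. Then for all x, y on the X-unit sphere, ‖ x/‖x‖_E − y/‖y‖_E ‖_E ≤ ‖x − y‖_E; i.e. radial projection from S_X onto the Euclidean unit sphere is 1-Lipschitz with respect to the Euclidean metric. -/
open Set Real
open scoped RealInnerProductSpace

theorem stmt6 (N : EuclideanSpace ℝ (Fin 2) → ℝ)
    (hN_add : ∀ v w, N (v + w) ≤ N v + N w)
    (hN_smul : ∀ (a : ℝ) (w : EuclideanSpace ℝ (Fin 2)), N (a • w) = |a| * N w)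
    (hN_def : ∀ w, N w = 0 → w = 0)
    (hNE : ∀ w, N w ≤ ‖w‖)
    (x y : EuclideanSpace ℝ (Fin 2))
    (hxX : N x = 1) (hyX : N y = 1) :
    ‖‖x‖⁻¹ • x - ‖y‖⁻¹ • y‖ ≤ ‖x - y‖ := by
  have ha : (1:ℝ) ≤ ‖x‖ := hxX ▸ hNE x
  have hb : (1:ℝ) ≤ ‖y‖ := hyX ▸ hNE y
  have ha0 : (0:ℝ) < ‖x‖ := lt_of_lt_of_le one_pos ha
  have hb0 : (0:ℝ) < ‖y‖ := lt_of_lt_of_le one_pos hb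
  have ht : ⟪x, y⟫ ≤ ‖x‖ * ‖y‖ := real_inner_le_norm x y
  rw [← Real.sqrt_sq (norm_nonneg (‖x‖⁻¹ • x - ‖y‖⁻¹ • y)),
      ← Real.sqrt_sq (norm_nonneg (x - y))]
  apply Real.sqrt_le_sqrt
  have h1 : ‖‖x‖⁻¹ • x - ‖y‖⁻¹ • y‖ ^ 2 =
      ‖‖x‖⁻¹ • x‖ ^ 2 - 2 * ⟪‖x‖⁻¹ • x, ‖y‖⁻¹ • y⟫ + ‖‖y‖⁻¹ • y‖ ^ 2 := by
    rw [@norm_sub_sq_real]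
  have h2 : ‖x - y‖ ^ 2 = ‖x‖ ^ 2 - 2 * ⟪x, y⟫ + ‖y‖ ^ 2 := by
    rw [@norm_sub_sq_real]
  rw [h1, h2, real_inner_smul_left, real_inner_smul_right, norm_smul, norm_smul,
      Real.norm_eq_abs, Real.norm_eq_abs, abs_of_pos (inv_pos.2 ha0),
      abs_of_pos (inv_pos.2 hb0)]
  have hxi : ‖x‖⁻¹ * ‖x‖ = 1 := inv_mul_cancel₀ (ne_of_gt ha0)
  have hyi : ‖y‖⁻¹ * ‖y‖ = 1 := inv_mul_cancel₀ (ne_of_gt hb0)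
  have key : ⟪x, y⟫ * (1 - ‖x‖⁻¹ * ‖y‖⁻¹) ≤ ‖x‖ * ‖y‖ * (1 - ‖x‖⁻¹ * ‖y‖⁻¹) := by
    apply mul_le_mul_of_nonneg_right ht
    have : ‖x‖⁻¹ * ‖y‖⁻¹ ≤ 1 := by
      calc ‖x‖⁻¹ * ‖y‖⁻¹ ≤ 1 * 1 := by
            apply mul_le_mul
            · exact inv_le_one_of_one_le₀ ha
            · exact inv_le_one_of_one_le₀ hb
            · positivity
            · norm_num
        _ = 1 := by ring
    linarith
  nlinarith [sq_nonneg (‖x‖ - ‖y‖), sq_nonneg (‖x‖⁻¹), sq_nonneg (‖y‖⁻¹),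
    mul_pos ha0 hb0]
end

section
/- For any norm ‖·‖ on a real vector space V with unit sphere S, the intrinsic metric d on S satisfies ‖x−y‖ ≤ d(x,y) ≤ √2·π·‖x−y‖ for all x, y ∈ S. In particular the intrinsic metric and the induced norm metric on S are strongly equivalent. -/
/-
The lower bound `‖x - y‖ ≤ d(x, y)` is the trivial partition of any path. For the upper bound
we measure paths by their variation (`eVariationOn`), which dominates `pathLength`.

If `‖x - y‖ ≤ 1`, the segment `[x, y]` stays at norm `≥ 1/2`, where the radial projection
`a ↦ a / ‖a‖` is `4`-Lipschitz; projecting the segment gives `d(x, y) ≤ 4 ‖x - y‖`.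

Otherwise, choose an Auerbach basis `u, v` (maximising a determinant on the unit sphere) of a
plane through `x` and `y`. In each quadrant of that plane both coordinates of the unit circle are
monotone, so each quarter of the circle has length `≤ 2` and the whole circle `≤ 8`; one of the
two arcs from `x` to `y` then has length `≤ 4 ≤ 4 ‖x - y‖`. Both cases end with `4 ≤ √2 π`.
-/

open Set Real
open scoped ENNReal

/-- The length of a path `ρ` (restricted to `[0,1]`) with respect to a norm-like
function `N`, as the supremum over partitions `0 = t₀ < … < tₙ = 1` of
`∑ N (ρ tⱼ₊₁ - ρ tⱼ)`. -/
noncomputable def pathLength {V : Type*} [AddCommGroup V]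
    (N : V → ℝ) (ρ : ℝ → V) : ℝ≥0∞ :=
  ⨆ p : {q : ℕ × (ℕ → ℝ) // StrictMonoOn q.2 (Set.Iic q.1) ∧ q.2 0 = 0 ∧ q.2 q.1 = 1},
    ENNReal.ofReal (∑ j ∈ Finset.range p.1.1, N (ρ (p.1.2 (j + 1)) - ρ (p.1.2 j)))

/-- The (extended) intrinsic metric on a subset `S`, with respect to a norm-like
function `N`: the infimum of the `N`-lengths of continuous paths in `S` from `x` to `y`. -/
noncomputable def intrinsicDist {V : Type*} [AddCommGroup V] [TopologicalSpace V]
    (N : V → ℝ) (S : Set V) (x y : V) : ℝ≥0∞ :=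
  ⨅ ρ : {ρ : ℝ → V // ContinuousOn ρ (Icc 0 1) ∧ MapsTo ρ (Icc 0 1) S ∧ ρ 0 = x ∧ ρ 1 = y},
    pathLength N ρ

/-- The (extended) planar intrinsic metric on a subset `S`: as `intrinsicDist`, but with
the infimum restricted to paths whose image spans a two-dimensional subspace. -/
noncomputable def planarIntrinsicDist {V : Type*} [AddCommGroup V] [Module ℝ V] [TopologicalSpace V]
    (N : V → ℝ) (S : Set V) (x y : V) : ℝ≥0∞ :=
  ⨅ ρ : {ρ : ℝ → V // ContinuousOn ρ (Icc 0 1) ∧ MapsTo ρ (Icc 0 1) S ∧ ρ 0 = x ∧ ρ 1 = y ∧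
      Module.finrank ℝ (Submodule.span ℝ (ρ '' Icc 0 1)) = 2},
    pathLength N ρ

open scoped NNReal

section Paths

variable {V : Type*} [SeminormedAddCommGroup V]

theorem pathLength_norm_le_eVariationOn (ρ : ℝ → V) :
    pathLength (fun w => ‖w‖) ρ ≤ eVariationOn ρ (Icc 0 1) := by
  refine iSup_le fun ⟨⟨n, t⟩, ht, ht0, htn⟩ => ?_
  dsimp only at ht ht0 htn ⊢
  have htIcc : ∀ j ≤ n, t j ∈ Icc 0 1 := fun j hj =>
    ⟨ht0 ▸ ht.monotoneOn (Nat.zero_le n) hj (Nat.zero_le j),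
      htn ▸ ht.monotoneOn hj (le_refl n) hj⟩
  calc ENNReal.ofReal (∑ j ∈ Finset.range n, ‖ρ (t (j + 1)) - ρ (t j)‖)
      = ∑ j ∈ Finset.range n, edist (ρ (t (j + 1))) (ρ (t j)) := by
        rw [ENNReal.ofReal_sum_of_nonneg fun _ _ => norm_nonneg _]
        simp only [edist_dist, dist_eq_norm]
    _ ≤ eVariationOn ρ (Icc 0 1) :=
        eVariationOn.sum_le_of_monotoneOn_Iic ht.monotoneOn htIcc

theorem ofReal_norm_sub_le_pathLength (ρ : ℝ → V) :
    ENNReal.ofReal ‖ρ 0 - ρ 1‖ ≤ pathLength (fun w => ‖w‖) ρ := by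
  have hmono : StrictMonoOn (fun j : ℕ => (j : ℝ)) (Iic 1) :=
    fun _ _ _ _ h => Nat.cast_lt.mpr h
  refine le_trans ?_ (le_iSup _ ⟨(1, fun j : ℕ => (j : ℝ)), hmono, Nat.cast_zero, Nat.cast_one⟩)
  simp [norm_sub_rev]

variable {S : Set V} {x y : V}

theorem ofReal_norm_sub_le_intrinsicDist :
    ENNReal.ofReal ‖x - y‖ ≤ intrinsicDist (fun w => ‖w‖) S x y := by
  refine le_iInf fun ρ => ?_
  obtain ⟨ρ, -, -, rfl, rfl⟩ := ρ
  exact ofReal_norm_sub_le_pathLength ρ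

theorem intrinsicDist_le_eVariationOn {ρ : ℝ → V} (hρ : ContinuousOn ρ (Icc 0 1))
    (hS : MapsTo ρ (Icc 0 1) S) (h0 : ρ 0 = x) (h1 : ρ 1 = y) :
    intrinsicDist (fun w => ‖w‖) S x y ≤ eVariationOn ρ (Icc 0 1) :=
  (iInf_le_of_le (⟨ρ, hρ, hS, h0, h1⟩ : Subtype _) le_rfl).trans
    (pathLength_norm_le_eVariationOn ρ)

theorem intrinsicDist_le_eVariationOn_uIcc {f : ℝ → V} {a b : ℝ} (hf : ContinuousOn f (uIcc a b))
    (hS : MapsTo f (uIcc a b) S) :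
    intrinsicDist (fun w => ‖w‖) S (f a) (f b) ≤ eVariationOn f (uIcc a b) := by
  set φ : ℝ → ℝ := ⇑(AffineMap.lineMap (k := ℝ) a b)
  have hφ : MapsTo φ (Icc 0 1) (uIcc a b) := fun t ht => by
    rw [← segment_eq_uIcc]
    exact lineMap_mem_segment ℝ a b ht
  refine (intrinsicDist_le_eVariationOn (ρ := f ∘ φ) (hf.comp (by fun_prop) hφ) (hS.comp hφ)
    (by simp [φ]) (by simp [φ])).trans ?_
  rcases le_total a b with hab | hba
  · exact eVariationOn.comp_le_of_monotoneOn f φ ((AffineMap.lineMap_mono hab).monotoneOn _) hφ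
  · exact eVariationOn.comp_le_of_antitoneOn f φ ((AffineMap.lineMap_anti hba).antitoneOn _) hφ

end Paths

theorem eVariationOn_le_of_edist_le {α E F : Type*} [LinearOrder α] [PseudoEMetricSpace E]
    [PseudoEMetricSpace F] {f : α → E} {g : α → F} {s : Set α}
    (h : ∀ a ∈ s, ∀ b ∈ s, a ≤ b → edist (f b) (f a) ≤ edist (g b) (g a)) :
    eVariationOn f s ≤ eVariationOn g s :=
  iSup_le fun ⟨_, _, ht, hts⟩ =>
    (Finset.sum_le_sum fun i _ => h _ (hts i) _ (hts (i + 1)) (ht i.le_succ)).trans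
      (eVariationOn.sum_le ht hts)

theorem eVariationOn_comp_add_right {E : Type*} [PseudoEMetricSpace E] (f : ℝ → E) (a b c : ℝ) :
    eVariationOn (fun x => f (x + c)) (Icc a b) = eVariationOn f (Icc (a + c) (b + c)) := by
  rw [← image_add_const_Icc]
  exact eVariationOn.comp_eq_of_monotoneOn f (· + c) ((monotone_id.add_const c).monotoneOn _)

theorem Function.Periodic.eVariationOn_Icc_add {E : Type*} [PseudoEMetricSpace E] {f : ℝ → E}
    {T : ℝ} (hf : Function.Periodic f T) (hT : 0 < T) (a : ℝ) :
    eVariationOn f (Icc a (a + T)) = eVariationOn f (Icc 0 T) := by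
  obtain ⟨hb0, hbT⟩ := toIcoMod_mem_Ico' hT a
  set b := toIcoMod hT 0 a
  have hshift : a = b + toIcoDiv hT 0 a • T := (toIcoMod_add_toIcoDiv_zsmul hT 0 a).symm
  have htail : eVariationOn f (Icc T (b + T)) = eVariationOn f (Icc 0 b) := by
    have := eVariationOn_comp_add_right f 0 b T
    rwa [zero_add, funext hf, eq_comm] at this
  calc eVariationOn f (Icc a (a + T))
      = eVariationOn (fun x => f (x + toIcoDiv hT 0 a • T)) (Icc b (b + T)) := by
        rw [eVariationOn_comp_add_right, ← hshift, add_right_comm, ← hshift]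
    _ = eVariationOn f (Icc b T) + eVariationOn f (Icc T (b + T)) := by
        rw [funext fun x => (hf.zsmul _) x]
        simpa using (eVariationOn.Icc_add_Icc f (s := univ) hbT.le (by linarith) (mem_univ T)).symm
    _ = eVariationOn f (Icc 0 T) := by
        rw [htail, add_comm]
        simpa using eVariationOn.Icc_add_Icc f (s := univ) hb0 hbT.le (mem_univ b)

section Normalize

variable {V : Type*} [NormedAddCommGroup V] [NormedSpace ℝ V]

theorem lipschitzOnWith_inv_norm_smul {m : ℝ≥0} (hm : 0 < m) :
    LipschitzOnWith (2 / m) (fun a : V => ‖a‖⁻¹ • a) {a | (m : ℝ) ≤ ‖a‖} := by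
  refine LipschitzOnWith.of_dist_le_mul fun a (ha : (m : ℝ) ≤ ‖a‖) b _ => ?_
  have ha0 : 0 < ‖a‖ := (NNReal.coe_pos.mpr hm).trans_le ha
  have hsplit : ‖a‖⁻¹ • a - ‖b‖⁻¹ • b = ‖a‖⁻¹ • ((a - b) + (1 - ‖a‖ * ‖b‖⁻¹) • b) := by
    rw [smul_add, smul_smul, mul_sub, mul_one, ← mul_assoc, inv_mul_cancel₀ ha0.ne', one_mul,
      sub_smul, smul_sub]
    abel
  have hrad : ‖(1 - ‖a‖ * ‖b‖⁻¹) • b‖ ≤ ‖a - b‖ := by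
    rcases eq_or_ne b 0 with rfl | hb
    · simp
    have hb0 : 0 < ‖b‖ := norm_pos_iff.mpr hb
    have hscale : (1 - ‖a‖ * ‖b‖⁻¹) * ‖b‖ = ‖b‖ - ‖a‖ := by field_simp
    calc ‖(1 - ‖a‖ * ‖b‖⁻¹) • b‖ = |‖b‖ - ‖a‖| := by
          rw [norm_smul, Real.norm_eq_abs, ← abs_norm b, ← abs_mul, abs_norm, hscale]
      _ ≤ ‖a - b‖ := (abs_norm_sub_norm_le b a).trans_eq (norm_sub_rev b a)
  rw [dist_eq_norm, dist_eq_norm, hsplit, norm_smul, norm_inv, norm_norm]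
  calc ‖a‖⁻¹ * ‖(a - b) + (1 - ‖a‖ * ‖b‖⁻¹) • b‖ ≤ ‖a‖⁻¹ * (2 * ‖a - b‖) := by
        gcongr
        linarith [norm_add_le (a - b) ((1 - ‖a‖ * ‖b‖⁻¹) • b)]
    _ ≤ (m : ℝ)⁻¹ * (2 * ‖a - b‖) := by gcongr
    _ = ((2 / m : ℝ≥0) : ℝ) * ‖a - b‖ := by push_cast; ring

end Normalize

section ShortChord

variable {V : Type*} [NormedAddCommGroup V] [NormedSpace ℝ V] {x y : V}

theorem half_le_norm_lineMap (hx : ‖x‖ = 1) (hy : ‖y‖ = 1) (hxy : ‖x - y‖ ≤ 1) {t : ℝ}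
    (ht : t ∈ Icc (0 : ℝ) 1) : (1 / 2 : ℝ) ≤ ‖AffineMap.lineMap (k := ℝ) x y t‖ := by
  have hleft := dist_lineMap_left x y t
  have hright := dist_lineMap_right x y t
  rw [dist_eq_norm, dist_eq_norm] at hleft hright
  rw [Real.norm_eq_abs, abs_of_nonneg ht.1] at hleft
  rw [Real.norm_eq_abs, abs_of_nonneg (sub_nonneg.mpr ht.2)] at hright
  have h1 := norm_sub_norm_le x (AffineMap.lineMap (k := ℝ) x y t)
  have h2 := norm_sub_norm_le y (AffineMap.lineMap (k := ℝ) x y t)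
  rw [norm_sub_rev] at h1 h2
  nlinarith [ht.1, ht.2, norm_nonneg (x - y)]

theorem intrinsicDist_sphere_le_of_norm_sub_le_one (hx : ‖x‖ = 1) (hy : ‖y‖ = 1)
    (hxy : ‖x - y‖ ≤ 1) :
    intrinsicDist (fun w => ‖w‖) (Metric.sphere (0 : V) 1) x y ≤ ENNReal.ofReal (4 * ‖x - y‖) := by
  set seg : ℝ → V := ⇑(AffineMap.lineMap (k := ℝ) x y)
  have hseg : MapsTo seg (Icc 0 1) {a | ((1 / 2 : ℝ≥0) : ℝ) ≤ ‖a‖} := fun t ht => by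
    simpa using half_le_norm_lineMap hx hy hxy ht
  have hnormalize := lipschitzOnWith_inv_norm_smul (V := V) (m := 1 / 2) (by norm_num)
  set ρ : ℝ → V := (fun a : V => ‖a‖⁻¹ • a) ∘ seg
  have hρ : ContinuousOn ρ (Icc 0 1) :=
    hnormalize.continuousOn.comp (AffineMap.lineMap_continuous.continuousOn) hseg
  have hS : MapsTo ρ (Icc 0 1) (Metric.sphere 0 1) := fun t ht => by
    have hpos : 0 < ‖seg t‖ := lt_of_lt_of_le (by norm_num) (half_le_norm_lineMap hx hy hxy ht)
    simp [ρ, norm_smul, inv_mul_cancel₀ hpos.ne']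
  refine (intrinsicDist_le_eVariationOn hρ hS (by simp [ρ, seg, hx])
    (by simp [ρ, seg, hy])).trans ?_
  calc eVariationOn ρ (Icc 0 1) ≤ (2 / (1 / 2) : ℝ≥0) * eVariationOn seg (Icc 0 1) :=
        hnormalize.comp_eVariationOn_le hseg
    _ ≤ (2 / (1 / 2) : ℝ≥0) * (nndist x y * eVariationOn id (Icc (0 : ℝ) 1)) := by
        gcongr
        exact (lipschitzWith_lineMap x y).lipschitzOnWith.comp_eVariationOn_le (mapsTo_univ _ _)
    _ = ENNReal.ofReal (4 * ‖x - y‖) := by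
        rw [eVariationOn_id_Icc, sub_zero, ENNReal.ofReal_one, mul_one,
          ENNReal.ofReal_mul (by norm_num), ← dist_eq_norm, ← edist_dist, edist_nndist]
        norm_num

end ShortChord

structure IsAuerbachPair {V : Type*} [NormedAddCommGroup V] [NormedSpace ℝ V] (u v : V) :
    Prop where
  norm_left : ‖u‖ = 1
  norm_right : ‖v‖ = 1
  abs_left_le : ∀ a b : ℝ, |a| ≤ ‖a • u + b • v‖
  abs_right_le : ∀ a b : ℝ, |b| ≤ ‖a • u + b • v‖

namespace IsAuerbachPair

variable {V W : Type*} [NormedAddCommGroup V] [NormedSpace ℝ V] [NormedAddCommGroup W]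
  [NormedSpace ℝ W] {u v : V}

theorem symm (h : IsAuerbachPair u v) : IsAuerbachPair v u where
  norm_left := h.norm_right
  norm_right := h.norm_left
  abs_left_le a b := add_comm (a • v) (b • u) ▸ h.abs_right_le b a
  abs_right_le a b := add_comm (a • v) (b • u) ▸ h.abs_left_le b a

theorem rotate (h : IsAuerbachPair u v) : IsAuerbachPair v (-u) where
  norm_left := h.norm_right
  norm_right := by rw [norm_neg, h.norm_left]
  abs_left_le a b := by
    simpa [smul_neg, ← neg_smul, add_comm] using h.abs_right_le (-b) a
  abs_right_le a b := by
    simpa [smul_neg, ← neg_smul, add_comm] using h.abs_left_le (-b) a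

theorem map (h : IsAuerbachPair u v) (f : V →ₗᵢ[ℝ] W) : IsAuerbachPair (f u) (f v) where
  norm_left := by rw [f.norm_map, h.norm_left]
  norm_right := by rw [f.norm_map, h.norm_right]
  abs_left_le a b := by simpa [← map_smul, ← map_add] using h.abs_left_le a b
  abs_right_le a b := by simpa [← map_smul, ← map_add] using h.abs_right_le a b

/-- `hcross` says that `a₂ • u + b₂ • v` lies at a larger angle than `a₁ • u + b₁ • v`: in the
closed first quadrant, the second coordinate of the unit circle increases with the angle. -/
theorem right_coord_le_of_cross_le (h : IsAuerbachPair u v) {a₁ b₁ a₂ b₂ : ℝ} (ha₁ : 0 ≤ a₁)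
    (hb₁ : 0 ≤ b₁) (ha₂ : 0 ≤ a₂) (hb₂ : 0 ≤ b₂) (h₁ : ‖a₁ • u + b₁ • v‖ = 1)
    (h₂ : ‖a₂ • u + b₂ • v‖ = 1)
    (hcross : a₂ * b₁ ≤ a₁ * b₂) : b₁ ≤ b₂ := by
  have hb₁_le : b₁ ≤ 1 := by simpa [abs_of_nonneg hb₁, h₁] using h.abs_right_le a₁ b₁
  have hsum : 1 ≤ a₂ + b₂ := by
    calc 1 = ‖a₂ • u + b₂ • v‖ := h₂.symm
      _ ≤ ‖a₂ • u‖ + ‖b₂ • v‖ := norm_add_le _ _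
      _ = a₂ + b₂ := by
        rw [norm_smul, norm_smul, h.norm_left, h.norm_right, Real.norm_of_nonneg ha₂,
          Real.norm_of_nonneg hb₂, mul_one, mul_one]
  have hkey : a₁ ≤ a₂ + (a₁ * b₂ - a₂ * b₁) := by
    have hdecomp : a₁ • (a₂ • u + b₂ • v) = a₂ • (a₁ • u + b₁ • v) + (a₁ * b₂ - a₂ * b₁) • v := by
      module
    calc a₁ = ‖a₁ • (a₂ • u + b₂ • v)‖ := by rw [norm_smul, h₂, Real.norm_of_nonneg ha₁, mul_one]
      _ ≤ ‖a₂ • (a₁ • u + b₁ • v)‖ + ‖(a₁ * b₂ - a₂ * b₁) • v‖ := hdecomp ▸ norm_add_le _ _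
      _ = a₂ + (a₁ * b₂ - a₂ * b₁) := by
        rw [norm_smul, norm_smul, h₁, h.norm_right, Real.norm_of_nonneg ha₂,
          Real.norm_of_nonneg (sub_nonneg.mpr hcross), mul_one, mul_one]
  by_contra! hlt
  nlinarith [mul_nonneg ha₂ (sub_nonneg.mpr hb₁_le)]

end IsAuerbachPair

section Circle

variable {V : Type*} [NormedAddCommGroup V] [NormedSpace ℝ V] {u v : V}

noncomputable def circleDir (u v : V) (θ : ℝ) : V := cos θ • u + sin θ • v

/-- For an Auerbach pair, a `2π`-periodic parametrisation of the unit circle of `span {u, v}` by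
the Euclidean angle in the coordinates `(u, v)`. -/
noncomputable def circlePoint (u v : V) (θ : ℝ) : V := ‖circleDir u v θ‖⁻¹ • circleDir u v θ

theorem circleDir_add_pi_div_two (u v : V) (θ : ℝ) :
    circleDir u v (θ + π / 2) = circleDir v (-u) θ := by
  rw [circleDir, circleDir, cos_add_pi_div_two, sin_add_pi_div_two]
  module

theorem circlePoint_add_pi_div_two (u v : V) (θ : ℝ) :
    circlePoint u v (θ + π / 2) = circlePoint v (-u) θ := by
  rw [circlePoint, circlePoint, circleDir_add_pi_div_two]

theorem periodic_circlePoint (u v : V) : Function.Periodic (circlePoint u v) (2 * π) := by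
  intro θ
  simp only [circlePoint, circleDir, cos_add_two_pi, sin_add_two_pi]

theorem IsAuerbachPair.norm_circleDir_pos (h : IsAuerbachPair u v) (θ : ℝ) :
    0 < ‖circleDir u v θ‖ := by
  have hcos := h.abs_left_le (cos θ) (sin θ)
  have hsin := h.abs_right_le (cos θ) (sin θ)
  rw [← circleDir] at hcos hsin
  by_contra! hle
  have hc : cos θ = 0 := abs_nonpos_iff.mp (hcos.trans hle)
  have hs : sin θ = 0 := abs_nonpos_iff.mp (hsin.trans hle)
  simpa [hc, hs] using sin_sq_add_cos_sq θ

theorem IsAuerbachPair.norm_circlePoint (h : IsAuerbachPair u v) (θ : ℝ) :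
    ‖circlePoint u v θ‖ = 1 := by
  rw [circlePoint, norm_smul, norm_inv, norm_norm, inv_mul_cancel₀ (h.norm_circleDir_pos θ).ne']

theorem IsAuerbachPair.continuous_circlePoint (h : IsAuerbachPair u v) :
    Continuous (circlePoint u v) := by
  have hdir : Continuous (circleDir u v) := by unfold circleDir; fun_prop
  exact (hdir.norm.inv₀ fun θ => (h.norm_circleDir_pos θ).ne').smul hdir

noncomputable def circleCoordLeft (u v : V) (θ : ℝ) : ℝ := cos θ / ‖circleDir u v θ‖

noncomputable def circleCoordRight (u v : V) (θ : ℝ) : ℝ := sin θ / ‖circleDir u v θ‖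

theorem circlePoint_eq_smul_add (u v : V) (θ : ℝ) :
    circlePoint u v θ = circleCoordLeft u v θ • u + circleCoordRight u v θ • v := by
  rw [circlePoint, circleDir, circleCoordLeft, circleCoordRight, smul_add, smul_smul, smul_smul,
    div_eq_inv_mul, div_eq_inv_mul, circleDir]

theorem IsAuerbachPair.circleCoords_mono (h : IsAuerbachPair u v) {s t : ℝ} (hs : 0 ≤ s)
    (hst : s ≤ t) (ht : t ≤ π / 2) :
    circleCoordRight u v s ≤ circleCoordRight u v t ∧
      circleCoordLeft u v t ≤ circleCoordLeft u v s := by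
  have hleft : ∀ θ ∈ Icc 0 (π / 2), 0 ≤ circleCoordLeft u v θ := fun θ hθ =>
    div_nonneg (cos_nonneg_of_mem_Icc ⟨by linarith [pi_pos, hθ.1], hθ.2⟩) (norm_nonneg _)
  have hright : ∀ θ ∈ Icc 0 (π / 2), 0 ≤ circleCoordRight u v θ := fun θ hθ =>
    div_nonneg (sin_nonneg_of_nonneg_of_le_pi hθ.1 (by linarith [pi_pos, hθ.2])) (norm_nonneg _)
  have hnorm : ∀ θ, ‖circleCoordLeft u v θ • u + circleCoordRight u v θ • v‖ = 1 := fun θ => by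
    rw [← circlePoint_eq_smul_add, h.norm_circlePoint]
  have hs' : s ∈ Icc 0 (π / 2) := ⟨hs, hst.trans ht⟩
  have ht' : t ∈ Icc 0 (π / 2) := ⟨hs.trans hst, ht⟩
  have hcross : circleCoordLeft u v t * circleCoordRight u v s ≤
      circleCoordLeft u v s * circleCoordRight u v t := by
    have hsin : 0 ≤ sin (t - s) :=
      sin_nonneg_of_nonneg_of_le_pi (sub_nonneg.mpr hst) (by linarith [pi_pos])
    rw [sin_sub] at hsin
    rw [circleCoordLeft, circleCoordLeft, circleCoordRight, circleCoordRight, div_mul_div_comm,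
      div_mul_div_comm, mul_comm ‖circleDir u v t‖]
    gcongr ?_ / _
    linarith
  refine ⟨h.right_coord_le_of_cross_le (hleft s hs') (hright s hs') (hleft t ht')
    (hright t ht') (hnorm s) (hnorm t) hcross, h.symm.right_coord_le_of_cross_le (hright t ht')
    (hleft t ht') (hright s hs') (hleft s hs') ?_ ?_ (by linarith)⟩ <;>
  rw [add_comm] <;> apply hnorm

/-- Chords of the quarter circle are bounded by increments of the monotone function
`circleCoordRight - circleCoordLeft`, which increases by `2` in total. -/
theorem IsAuerbachPair.eVariationOn_circlePoint_Icc_pi_div_two_le (h : IsAuerbachPair u v) :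
    eVariationOn (circlePoint u v) (Icc 0 (π / 2)) ≤ 2 := by
  set G : ℝ → ℝ := circleCoordRight u v - circleCoordLeft u v
  have hG : MonotoneOn G (Icc 0 (π / 2)) := fun s hs t ht hst => by
    have := h.circleCoords_mono hs.1 hst ht.2
    simp only [G, Pi.sub_apply]
    linarith
  have hchord : ∀ s ∈ Icc 0 (π / 2), ∀ t ∈ Icc 0 (π / 2), s ≤ t →
      edist (circlePoint u v t) (circlePoint u v s) ≤ edist (G t) (G s) := by
    intro s hs t ht hst
    obtain ⟨hR, hL⟩ := h.circleCoords_mono hs.1 hst ht.2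
    rw [edist_dist, edist_dist, dist_eq_norm, Real.dist_eq]
    refine ENNReal.ofReal_le_ofReal ?_
    calc ‖circlePoint u v t - circlePoint u v s‖
        = ‖(circleCoordLeft u v t - circleCoordLeft u v s) • u +
            (circleCoordRight u v t - circleCoordRight u v s) • v‖ := by
          rw [circlePoint_eq_smul_add, circlePoint_eq_smul_add, sub_smul, sub_smul]
          congr 1
          abel
      _ ≤ |circleCoordLeft u v t - circleCoordLeft u v s| +
            |circleCoordRight u v t - circleCoordRight u v s| := by
          refine (norm_add_le _ _).trans_eq ?_
          rw [norm_smul, norm_smul, h.norm_left, h.norm_right, Real.norm_eq_abs,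
            Real.norm_eq_abs, mul_one, mul_one]
      _ = |G t - G s| := by
          simp only [G, Pi.sub_apply]
          rw [abs_of_nonpos (by linarith), abs_of_nonneg (by linarith),
            abs_of_nonneg (by linarith)]
          ring
  have hquarter : (0 : ℝ) ≤ π / 2 := by positivity
  calc eVariationOn (circlePoint u v) (Icc 0 (π / 2)) ≤ eVariationOn G (Icc 0 (π / 2)) :=
        eVariationOn_le_of_edist_le hchord
    _ = ENNReal.ofReal (G (π / 2) - G 0) := by
        rw [← hG.eVariationOn_eq (left_mem_Icc.mpr hquarter) (right_mem_Icc.mpr hquarter),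
          inter_self]
    _ = 2 := by
        norm_num [G, circleCoordLeft, circleCoordRight, circleDir, h.norm_left, h.norm_right]

theorem IsAuerbachPair.eVariationOn_circlePoint_Icc_le (n : ℕ) (h : IsAuerbachPair u v) :
    eVariationOn (circlePoint u v) (Icc 0 (n * (π / 2))) ≤ 2 * n := by
  induction n generalizing u v with
  | zero => simp
  | succ n ih =>
    have hπ : 0 ≤ π / 2 := by positivity
    have hsplit := eVariationOn.Icc_add_Icc (circlePoint u v) (s := univ) hπ
      (by nlinarith : π / 2 ≤ n * (π / 2) + π / 2) (mem_univ _)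
    have htail : eVariationOn (circlePoint u v) (Icc (π / 2) (n * (π / 2) + π / 2)) =
        eVariationOn (circlePoint v (-u)) (Icc 0 (n * (π / 2))) := by
      have := eVariationOn_comp_add_right (circlePoint u v) 0 (n * (π / 2)) (π / 2)
      simpa only [zero_add, circlePoint_add_pi_div_two, eq_comm] using this
    simp only [univ_inter, htail] at hsplit
    calc eVariationOn (circlePoint u v) (Icc 0 ((n + 1 : ℕ) * (π / 2)))
        = eVariationOn (circlePoint u v) (Icc 0 (π / 2)) +
            eVariationOn (circlePoint v (-u)) (Icc 0 (n * (π / 2))) := by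
          rw [hsplit]; push_cast; ring_nf
      _ ≤ 2 + 2 * n := add_le_add h.eVariationOn_circlePoint_Icc_pi_div_two_le (ih h.rotate)
      _ = 2 * (n + 1 : ℕ) := by push_cast; ring

theorem IsAuerbachPair.eVariationOn_circlePoint_Icc_add_two_pi_le (h : IsAuerbachPair u v)
    (a : ℝ) : eVariationOn (circlePoint u v) (Icc a (a + 2 * π)) ≤ 8 := by
  rw [(periodic_circlePoint u v).eVariationOn_Icc_add two_pi_pos]
  have h4 := h.eVariationOn_circlePoint_Icc_le 4
  rw [show ((4 : ℕ) : ℝ) * (π / 2) = 2 * π by push_cast; ring] at h4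
  exact h4.trans_eq (by norm_num)

/-- The two arcs between the given points have total variation at most `8`. -/
theorem IsAuerbachPair.exists_eVariationOn_circlePoint_uIcc_le_four (h : IsAuerbachPair u v)
    (a b : ℝ) : ∃ a' b', circlePoint u v a' = circlePoint u v a ∧
      circlePoint u v b' = circlePoint u v b ∧ eVariationOn (circlePoint u v) (uIcc a' b') ≤ 4 := by
  set R := circlePoint u v
  obtain ⟨hac, hca⟩ := toIcoMod_mem_Ico two_pi_pos a b
  set c := toIcoMod two_pi_pos a b
  have hRc : R c = R b := by
    rw [show c = _ from (self_sub_toIcoDiv_zsmul two_pi_pos a b).symm]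
    exact (periodic_circlePoint u v).sub_zsmul_eq _
  have htotal : eVariationOn R (Icc a c) + eVariationOn R (Icc c (a + 2 * π)) ≤ 8 := by
    have := eVariationOn.Icc_add_Icc R (s := univ) hac hca.le (mem_univ c)
    simp only [univ_inter] at this
    exact this.trans_le (h.eVariationOn_circlePoint_Icc_add_two_pi_le a)
  by_cases hfirst : eVariationOn R (Icc a c) ≤ 4
  · exact ⟨a, c, rfl, hRc, by rwa [uIcc_of_le hac]⟩
  · refine ⟨a + 2 * π, c, periodic_circlePoint u v a, hRc, ?_⟩
    rw [uIcc_of_ge hca.le]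
    by_contra! hsecond
    have := ENNReal.add_lt_add (not_le.mp hfirst) hsecond
    norm_num at this
    exact (this.trans_le htotal).false

theorem IsAuerbachPair.intrinsicDist_circlePoint_le_four (h : IsAuerbachPair u v) (a b : ℝ) :
    intrinsicDist (fun w => ‖w‖) (Metric.sphere (0 : V) 1) (circlePoint u v a)
      (circlePoint u v b) ≤ 4 := by
  obtain ⟨a', b', ha, hb, hvar⟩ := h.exists_eVariationOn_circlePoint_uIcc_le_four a b
  rw [← ha, ← hb]
  refine (intrinsicDist_le_eVariationOn_uIcc h.continuous_circlePoint.continuousOn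
    fun θ _ => ?_).trans hvar
  simpa using h.norm_circlePoint θ

theorem exists_circlePoint_eq (u v : V) {a b : ℝ} (hw : ‖a • u + b • v‖ = 1) :
    ∃ θ, circlePoint u v θ = a • u + b • v := by
  set z : ℂ := ⟨a, b⟩
  have hz : z ≠ 0 := by
    rintro hz0
    obtain ⟨rfl, rfl⟩ : a = 0 ∧ b = 0 := ⟨congrArg Complex.re hz0, congrArg Complex.im hz0⟩
    simp at hw
  have hz0 : 0 < ‖z‖ := norm_pos_iff.mpr hz
  have hdir : circleDir u v (Complex.arg z) = ‖z‖⁻¹ • (a • u + b • v) := by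
    rw [circleDir, Complex.cos_arg hz, Complex.sin_arg]
    simp only [z, div_eq_inv_mul, mul_smul, smul_add]
  refine ⟨Complex.arg z, ?_⟩
  rw [circlePoint, hdir, norm_smul, hw, norm_inv, norm_norm, mul_one, inv_inv, smul_smul,
    mul_inv_cancel₀ hz0.ne', one_smul]

end Circle

section Auerbach

variable {E : Type*} [NormedAddCommGroup E] [NormedSpace ℝ E] (b : Module.Basis (Fin 2) ℝ E)

noncomputable def planeDet (p q : E) : ℝ := b.repr p 0 * b.repr q 1 - b.repr p 1 * b.repr q 0

theorem planeDet_smul_add_left (p q : E) (a c : ℝ) :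
    planeDet b (a • p + c • q) q = a * planeDet b p q := by
  simp only [planeDet, map_add, map_smul, Finsupp.add_apply, Finsupp.smul_apply, smul_eq_mul]
  ring

theorem planeDet_smul_add_right (p q : E) (a c : ℝ) :
    planeDet b p (a • p + c • q) = c * planeDet b p q := by
  simp only [planeDet, map_add, map_smul, Finsupp.add_apply, Finsupp.smul_apply, smul_eq_mul]
  ring

theorem planeDet_cramer {p q : E} (hpq : planeDet b p q ≠ 0) (z : E) :
    (planeDet b z q / planeDet b p q) • p + (planeDet b p z / planeDet b p q) • q = z := by
  rw [b.ext_elem_iff, Fin.forall_fin_two]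
  simp only [map_add, map_smul, Finsupp.add_apply, Finsupp.smul_apply, smul_eq_mul]
  constructor <;>
  · rw [div_mul_eq_mul_div, div_mul_eq_mul_div, ← add_div, div_eq_iff hpq, planeDet,
      planeDet, planeDet]
    ring

theorem planeDet_inv_norm_smul_basis :
    planeDet b (‖b 0‖⁻¹ • b 0) (‖b 1‖⁻¹ • b 1) = ‖b 0‖⁻¹ * ‖b 1‖⁻¹ := by
  simp [planeDet]

theorem continuous_planeDet [FiniteDimensional ℝ E] :
    Continuous fun pq : E × E => planeDet b pq.1 pq.2 := by
  have hcoord : ∀ i, Continuous fun p : E => b.repr p i := fun i =>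
    (b.coord i).continuous_of_finiteDimensional
  unfold planeDet
  fun_prop

/-- Replacing `p` by `z / ‖z‖`, for `z = a • p + c • q`, multiplies the determinant by `a / ‖z‖`,
so maximality gives `|a| ≤ ‖z‖`. -/
theorem isAuerbachPair_of_isMaxOn {p q : E} (hp : ‖p‖ = 1)
    (hq : ‖q‖ = 1) (hpq : planeDet b p q ≠ 0)
    (hmax : IsMaxOn (fun pq : E × E => |planeDet b pq.1 pq.2|)
      (Metric.sphere 0 1 ×ˢ Metric.sphere 0 1) (p, q)) :
    IsAuerbachPair p q := by
  have hbound : ∀ z : E, |planeDet b z q| ≤ ‖z‖ * |planeDet b p q| ∧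
      |planeDet b p z| ≤ ‖z‖ * |planeDet b p q| := by
    intro z
    rcases eq_or_ne z 0 with rfl | hz
    · simp [planeDet]
    have hz0 : 0 < ‖z‖ := norm_pos_iff.mpr hz
    have hz' : ‖‖z‖⁻¹ • z‖ = 1 := by rw [norm_smul, norm_inv, norm_norm, inv_mul_cancel₀ hz0.ne']
    have hleft : |planeDet b (‖z‖⁻¹ • z) q| ≤ |planeDet b p q| :=
      hmax (mk_mem_prod (mem_sphere_zero_iff_norm.mpr hz') (mem_sphere_zero_iff_norm.mpr hq))
    have hright : |planeDet b p (‖z‖⁻¹ • z)| ≤ |planeDet b p q| :=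
      hmax (mk_mem_prod (mem_sphere_zero_iff_norm.mpr hp) (mem_sphere_zero_iff_norm.mpr hz'))
    have hl := planeDet_smul_add_left b z q ‖z‖⁻¹ 0
    have hr := planeDet_smul_add_right b p z 0 ‖z‖⁻¹
    simp only [zero_smul, add_zero, zero_add] at hl hr
    rw [hl, abs_mul, abs_inv, abs_norm, inv_mul_le_iff₀ hz0] at hleft
    rw [hr, abs_mul, abs_inv, abs_norm, inv_mul_le_iff₀ hz0] at hright
    exact ⟨hleft, hright⟩
  have hD : 0 < |planeDet b p q| := abs_pos.mpr hpq
  refine ⟨hp, hq, fun a c => ?_, fun a c => ?_⟩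
  · refine le_of_mul_le_mul_right ?_ hD
    rw [← abs_mul, ← planeDet_smul_add_left b p q a c]
    exact (hbound _).1
  · refine le_of_mul_le_mul_right ?_ hD
    rw [← abs_mul, ← planeDet_smul_add_right b p q a c]
    exact (hbound _).2

theorem exists_isAuerbachPair_of_finrank_eq_two (hE : Module.finrank ℝ E = 2) :
    ∃ u v : E, IsAuerbachPair u v ∧ ∀ z : E, ∃ a c : ℝ, a • u + c • v = z := by
  have : FiniteDimensional ℝ E := Module.finite_of_finrank_eq_succ hE
  have : Nontrivial E := Module.nontrivial_of_finrank_eq_succ hE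
  have b := Module.finBasisOfFinrankEq ℝ E hE
  have hS : (Metric.sphere (0 : E) 1 ×ˢ Metric.sphere (0 : E) 1).Nonempty :=
    (NormedSpace.sphere_nonempty.mpr zero_le_one).prod (NormedSpace.sphere_nonempty.mpr zero_le_one)
  obtain ⟨⟨p, q⟩, ⟨hp, hq⟩, hmax⟩ := ((isCompact_sphere 0 1).prod
    (isCompact_sphere 0 1)).exists_isMaxOn hS (continuous_planeDet b).abs.continuousOn
  rw [mem_sphere_zero_iff_norm] at hp hq
  have hpq : planeDet b p q ≠ 0 := by
    have hb : ∀ i, b i ≠ 0 := b.ne_zero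
    have hb' : ∀ i, ‖‖b i‖⁻¹ • b i‖ = 1 := fun i => by
      rw [norm_smul, norm_inv, norm_norm, inv_mul_cancel₀ (norm_ne_zero_iff.mpr (hb i))]
    have hle : |planeDet b (‖b 0‖⁻¹ • b 0) (‖b 1‖⁻¹ • b 1)| ≤ |planeDet b p q| :=
      hmax (mk_mem_prod (mem_sphere_zero_iff_norm.mpr (hb' 0))
        (mem_sphere_zero_iff_norm.mpr (hb' 1)))
    rw [planeDet_inv_norm_smul_basis] at hle
    refine abs_pos.mp (lt_of_lt_of_le ?_ hle)
    exact abs_pos.mpr (mul_ne_zero (inv_ne_zero (norm_ne_zero_iff.mpr (hb 0)))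
      (inv_ne_zero (norm_ne_zero_iff.mpr (hb 1))))
  exact ⟨p, q, isAuerbachPair_of_isMaxOn b hp hq hpq hmax, fun z => ⟨_, _, planeDet_cramer b hpq z⟩⟩

end Auerbach

section Plane

variable {V : Type*} [NormedAddCommGroup V] [NormedSpace ℝ V]

theorem exists_finrank_eq_two_mem (hdim : 2 ≤ Module.rank ℝ V) {x : V} (hx : x ≠ 0) (y : V) :
    ∃ P : Submodule ℝ V, Module.finrank ℝ P = 2 ∧ x ∈ P ∧ y ∈ P := by
  by_cases hyx : LinearIndependent ℝ ![y, x]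
  · exact ⟨_, (finrank_span_eq_card hyx).trans (Fintype.card_fin 2),
      Submodule.subset_span ⟨1, rfl⟩, Submodule.subset_span ⟨0, rfl⟩⟩
  obtain ⟨a, rfl⟩ : ∃ a : ℝ, a • x = y := by simpa [linearIndependent_fin2, hx] using hyx
  obtain ⟨w, hxw⟩ := exists_linearIndependent_pair_of_one_lt_rank
    (Cardinal.one_lt_two.trans_le hdim) hx
  have hxP : x ∈ Submodule.span ℝ (range ![x, w]) := Submodule.subset_span ⟨0, rfl⟩
  exact ⟨_, (finrank_span_eq_card hxw).trans (Fintype.card_fin 2), hxP,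
    Submodule.smul_mem _ a hxP⟩

theorem exists_isAuerbachPair_coords (hdim : 2 ≤ Module.rank ℝ V) {x : V} (hx : x ≠ 0) (y : V) :
    ∃ u v : V, IsAuerbachPair u v ∧ (∃ a b : ℝ, a • u + b • v = x) ∧
      ∃ a b : ℝ, a • u + b • v = y := by
  obtain ⟨P, hP, hx, hy⟩ := exists_finrank_eq_two_mem hdim hx y
  obtain ⟨u, v, huv, hspan⟩ := exists_isAuerbachPair_of_finrank_eq_two hP
  obtain ⟨a, b, hab⟩ := hspan ⟨x, hx⟩
  obtain ⟨c, d, hcd⟩ := hspan ⟨y, hy⟩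
  refine ⟨u, v, huv.map P.subtypeₗᵢ, ⟨a, b, ?_⟩, c, d, ?_⟩
  · simpa using congrArg Subtype.val hab
  · simpa using congrArg Subtype.val hcd

theorem intrinsicDist_sphere_le_four (hdim : 2 ≤ Module.rank ℝ V) {x y : V} (hx : ‖x‖ = 1)
    (hy : ‖y‖ = 1) : intrinsicDist (fun w => ‖w‖) (Metric.sphere (0 : V) 1) x y ≤ 4 := by
  obtain ⟨u, v, huv, ⟨a, b, rfl⟩, c, d, rfl⟩ :=
    exists_isAuerbachPair_coords hdim (norm_ne_zero_iff.mp (hx.trans_ne one_ne_zero)) y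
  obtain ⟨θ, hθ⟩ := exists_circlePoint_eq u v hx
  obtain ⟨φ, hφ⟩ := exists_circlePoint_eq u v hy
  rw [← hθ, ← hφ]
  exact huv.intrinsicDist_circlePoint_le_four θ φ

end Plane

theorem four_le_sqrt_two_mul_pi : (4 : ℝ) ≤ √2 * π := by
  nlinarith [Real.sq_sqrt (zero_le_two : (0 : ℝ) ≤ 2), Real.sqrt_nonneg 2, pi_gt_three]

theorem stmt8 {V : Type*} [NormedAddCommGroup V] [NormedSpace ℝ V]
    (hdim : 2 ≤ Module.rank ℝ V)
    (x y : V) (hx : ‖x‖ = 1) (hy : ‖y‖ = 1) :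
    ENNReal.ofReal ‖x - y‖ ≤ intrinsicDist (fun w => ‖w‖) (Metric.sphere (0 : V) 1) x y ∧
      intrinsicDist (fun w => ‖w‖) (Metric.sphere (0 : V) 1) x y ≤
        ENNReal.ofReal (Real.sqrt 2 * π * ‖x - y‖) := by
  refine ⟨ofReal_norm_sub_le_intrinsicDist, ?_⟩
  have hconst : 4 * ‖x - y‖ ≤ √2 * π * ‖x - y‖ :=
    mul_le_mul_of_nonneg_right four_le_sqrt_two_mul_pi (norm_nonneg _)
  rcases le_total ‖x - y‖ 1 with hnear | hfar
  · exact (intrinsicDist_sphere_le_of_norm_sub_le_one hx hy hnear).trans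
      (ENNReal.ofReal_le_ofReal hconst)
  · calc intrinsicDist (fun w => ‖w‖) (Metric.sphere (0 : V) 1) x y ≤ 4 :=
          intrinsicDist_sphere_le_four hdim hx hy
      _ = ENNReal.ofReal 4 := by norm_num
      _ ≤ ENNReal.ofReal (√2 * π * ‖x - y‖) := ENNReal.ofReal_le_ofReal (by linarith)
end

section
/- Let c(θ) = (cos θ, sin θ) and let ‖·‖_X be a norm on ℝ² with B_E ⊆ B_X ⊆ K·B_E for K ≥ 1. If |θ − φ| ≤ arccos(1/K), then ‖ c(θ)/‖c(θ)‖_X − c(φ)/‖c(φ)‖_X ‖_E ≤ K² · ‖c(θ) − c(φ)‖_E. -/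
/-!
The map `u ↦ N u • u` is `1`-Lipschitz on the Euclidean unit sphere. Take `a = N u ≤ b = N v` and
a supporting functional `m` of `N` at `v` (Hahn–Banach), so `‖m‖ ≤ 1`, `⟪m, v⟫ = b` and
`⟪m, u⟫ ≤ a`. With `t = ⟪u, v⟫`, `‖a • u - b • v‖² = a² + b² - 2tab` is convex in `a`, and at both
ends of `[⟪m, u⟫, b]` Cauchy–Schwarz bounds it by `2 - 2t = ‖u - v‖²`. Finally
`‖u / a - v / b‖ = ‖b • u - a • v‖ / (ab) = ‖a • u - b • v‖ / (ab)` and `ab ≥ K⁻²`.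
-/

open Set Real
open scoped RealInnerProductSpace

section Sublinear

variable {E : Type*} [AddCommGroup E] [Module ℝ E] {N : E → ℝ}

lemma nonneg_of_add_le_of_smul_eq (hN_add : ∀ v w, N (v + w) ≤ N v + N w)
    (hN_smul : ∀ (a : ℝ) (w : E), N (a • w) = |a| * N w) (w : E) : 0 ≤ N w := by
  have h := hN_add w ((-1 : ℝ) • w)
  rw [hN_smul, neg_one_smul, add_neg_cancel, ← zero_smul ℝ w, hN_smul] at h
  norm_num at h
  linarith

lemma exists_linearMap_le_of_add_le_of_smul_eq (hN_add : ∀ v w, N (v + w) ≤ N v + N w)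
    (hN_smul : ∀ (a : ℝ) (w : E), N (a • w) = |a| * N w) (v : E) :
    ∃ g : E →ₗ[ℝ] ℝ, (∀ w, g w ≤ N w) ∧ g v = N v := by
  have hN_nonneg := nonneg_of_add_le_of_smul_eq hN_add hN_smul
  rcases eq_or_ne v 0 with rfl | hv
  · refine ⟨0, hN_nonneg, ?_⟩
    rw [← zero_smul ℝ (0 : E), hN_smul]
    simp
  obtain ⟨g, hg_ext, hg_le⟩ := exists_extension_of_le_sublinear
    (LinearPMap.mkSpanSingleton v (N v) hv) N
    (fun a ha w => by rw [hN_smul, abs_of_pos ha]) hN_add (by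
      rintro ⟨_, hx⟩
      obtain ⟨a, rfl⟩ := Submodule.mem_span_singleton.mp hx
      rw [LinearPMap.mkSpanSingleton'_apply, hN_smul, smul_eq_mul]
      exact mul_le_mul_of_nonneg_right (le_abs_self a) (hN_nonneg v))
  refine ⟨g, hg_le, ?_⟩
  rw [hg_ext ⟨v, Submodule.mem_span_singleton_self v⟩]
  exact LinearPMap.mkSpanSingleton'_apply_self _ _ _ _

end Sublinear

section InnerProduct

variable {E : Type*} [NormedAddCommGroup E] [InnerProductSpace ℝ E]

lemma exists_inner_le_of_le_norm [CompleteSpace E] {N : E → ℝ}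
    (hN_add : ∀ v w, N (v + w) ≤ N v + N w)
    (hN_smul : ∀ (a : ℝ) (w : E), N (a • w) = |a| * N w) (hNE : ∀ w, N w ≤ ‖w‖) (v : E) :
    ∃ m : E, ‖m‖ ≤ 1 ∧ (∀ w, ⟪m, w⟫ ≤ N w) ∧ ⟪m, v⟫ = N v := by
  obtain ⟨g, hg_le, hg_v⟩ := exists_linearMap_le_of_add_le_of_smul_eq hN_add hN_smul v
  have hg_bound : ∀ w, ‖g w‖ ≤ 1 * ‖w‖ := fun w => by
    have h := (hg_le (-w)).trans (hNE (-w))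
    rw [map_neg, norm_neg] at h
    rw [one_mul, Real.norm_eq_abs, abs_le]
    exact ⟨by linarith, (hg_le w).trans (hNE w)⟩
  set m := (InnerProductSpace.toDual ℝ E).symm (g.mkContinuous 1 hg_bound)
  have hm : ∀ w, ⟪m, w⟫ = g w := fun w => by
    rw [InnerProductSpace.toDual_symm_apply, LinearMap.mkContinuous_apply]
  refine ⟨m, ?_, fun w => hm w ▸ hg_le w, hm v ▸ hg_v⟩
  have h : ‖m‖ ^ 2 ≤ ‖m‖ := by
    rw [← real_inner_self_eq_norm_sq, hm]
    exact (hg_le m).trans (hNE m)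
  nlinarith [norm_nonneg m]

lemma norm_smul_sub_smul_comm {u v : E} (huv : ‖u‖ = ‖v‖) (a b : ℝ) :
    ‖a • u - b • v‖ = ‖b • u - a • v‖ := by
  rw [← sq_eq_sq₀ (norm_nonneg _) (norm_nonneg _), norm_sub_sq_real, norm_sub_sq_real,
    norm_smul, norm_smul, norm_smul, norm_smul, real_inner_smul_left, real_inner_smul_right,
    real_inner_smul_left, real_inner_smul_right, huv]
  ring

lemma norm_smul_sub_inner_smul_le {u v m : E} (hu : ‖u‖ = 1) (hv : ‖v‖ = 1) (hm : ‖m‖ ≤ 1)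
    {a : ℝ} (hpa : ⟪m, u⟫ ≤ a) (hab : a ≤ ⟪m, v⟫) : ‖a • u - ⟪m, v⟫ • v‖ ≤ ‖u - v‖ := by
  set b := ⟪m, v⟫
  set p := ⟪m, u⟫
  set t := ⟪u, v⟫
  have hvv : ⟪v, v⟫ = 1 := by rw [real_inner_self_eq_norm_sq, hv, one_pow]
  have huu : ⟪u, u⟫ = 1 := by rw [real_inner_self_eq_norm_sq, hu, one_pow]
  have hmm : ⟪m, m⟫ ≤ 1 := by
    rw [real_inner_self_eq_norm_sq]; nlinarith [norm_nonneg m]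
  have hb : b ^ 2 ≤ 1 := by
    have := abs_real_inner_le_norm m v
    rw [hv, mul_one] at this
    nlinarith [abs_nonneg b, sq_abs b, norm_nonneg m]
  have ht : t ^ 2 ≤ 1 := by
    have := real_inner_mul_inner_self_le u v
    rw [huu, hvv] at this; nlinarith
  -- Cauchy–Schwarz for the components of `m` and `u` orthogonal to `v`
  have hCS : (p - t * b) ^ 2 ≤ (⟪m, m⟫ - b ^ 2) * (1 - t ^ 2) := by
    have h := real_inner_mul_inner_self_le (m - b • v) (u - t • v)
    simp only [inner_sub_left, inner_sub_right, real_inner_smul_left, real_inner_smul_right,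
      hvv, huu, real_inner_comm m v, real_inner_comm u v] at h
    nlinarith [h]
  have hf_p : p ^ 2 + b ^ 2 - 2 * t * p * b ≤ 2 * (1 - t) := by
    nlinarith [mul_le_mul_of_nonneg_right hmm (by linarith : (0:ℝ) ≤ 1 - t ^ 2)]
  have hf_b : b ^ 2 + b ^ 2 - 2 * t * b * b ≤ 2 * (1 - t) := by nlinarith
  have hf_a : a ^ 2 + b ^ 2 - 2 * t * a * b ≤ 2 * (1 - t) := by
    rcases le_total a (t * b) with h | h
    · nlinarith [mul_nonneg (sub_nonneg.2 hpa) (by linarith : 0 ≤ 2 * t * b - p - a)]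
    · nlinarith [mul_nonneg (sub_nonneg.2 hab) (by linarith : 0 ≤ b + a - 2 * t * b)]
  rw [← sq_le_sq₀ (norm_nonneg _) (norm_nonneg _), norm_sub_sq_real, norm_sub_sq_real,
    norm_smul, norm_smul, real_inner_smul_left, real_inner_smul_right, hu, hv]
  simp only [Real.norm_eq_abs, mul_pow, sq_abs]
  linarith

lemma norm_smul_sub_smul_le_of_le_norm [CompleteSpace E] {N : E → ℝ}
    (hN_add : ∀ v w, N (v + w) ≤ N v + N w)
    (hN_smul : ∀ (a : ℝ) (w : E), N (a • w) = |a| * N w) (hNE : ∀ w, N w ≤ ‖w‖)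
    {u v : E} (hu : ‖u‖ = 1) (hv : ‖v‖ = 1) : ‖N u • u - N v • v‖ ≤ ‖u - v‖ := by
  wlog h : N u ≤ N v generalizing u v
  · rw [norm_sub_rev, norm_sub_rev u]
    exact this hv hu (le_of_not_ge h)
  obtain ⟨m, hm, hm_le, hm_v⟩ := exists_inner_le_of_le_norm hN_add hN_smul hNE v
  simpa only [hm_v] using norm_smul_sub_inner_smul_le hu hv hm (hm_le u) (hm_v ▸ h)

lemma norm_inv_smul_sub_inv_smul_le [CompleteSpace E] {N : E → ℝ}
    (hN_add : ∀ v w, N (v + w) ≤ N v + N w)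
    (hN_smul : ∀ (a : ℝ) (w : E), N (a • w) = |a| * N w) (hNE : ∀ w, N w ≤ ‖w‖)
    {K : ℝ} (hKE : ∀ w, ‖w‖ ≤ K * N w) {u v : E} (hu : ‖u‖ = 1) (hv : ‖v‖ = 1) :
    ‖(N u)⁻¹ • u - (N v)⁻¹ • v‖ ≤ K ^ 2 * ‖u - v‖ := by
  have hN_nonneg := nonneg_of_add_le_of_smul_eq hN_add hN_smul
  have hKu : 1 ≤ K * N u := hu ▸ hKE u
  have hKv : 1 ≤ K * N v := hv ▸ hKE v
  have hu_pos : 0 < N u := (hN_nonneg u).lt_of_ne (by rintro h; rw [← h] at hKu; linarith)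
  have hv_pos : 0 < N v := (hN_nonneg v).lt_of_ne (by rintro h; rw [← h] at hKv; linarith)
  have huv_pos : 0 < N u * N v := mul_pos hu_pos hv_pos
  have hK : 1 ≤ K ^ 2 * (N u * N v) := by nlinarith [one_le_mul_of_one_le_of_one_le hKu hKv]
  have hrw : (N u)⁻¹ • u - (N v)⁻¹ • v = (N u * N v)⁻¹ • (N v • u - N u • v) := by
    rw [smul_sub, smul_smul, smul_smul]
    congr 2 <;> field_simp
  calc ‖(N u)⁻¹ • u - (N v)⁻¹ • v‖ = (N u * N v)⁻¹ * ‖N u • u - N v • v‖ := by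
        rw [hrw, norm_smul, norm_smul_sub_smul_comm (hu.trans hv.symm), Real.norm_of_nonneg
          (inv_nonneg.2 huv_pos.le)]
    _ ≤ (N u * N v)⁻¹ * ‖u - v‖ := by
        gcongr; exact norm_smul_sub_smul_le_of_le_norm hN_add hN_smul hNE hu hv
    _ ≤ K ^ 2 * ‖u - v‖ := by
        gcongr; rwa [inv_le_iff_one_le_mul₀ huv_pos]

end InnerProduct

theorem stmt11_general (N : EuclideanSpace ℝ (Fin 2) → ℝ)
    (hN_add : ∀ v w, N (v + w) ≤ N v + N w)
    (hN_smul : ∀ (a : ℝ) (w : EuclideanSpace ℝ (Fin 2)), N (a • w) = |a| * N w)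
    (hNE : ∀ w, N w ≤ ‖w‖)
    (K : ℝ) (hKE : ∀ w, ‖w‖ ≤ K * N w)
    (c : ℝ → EuclideanSpace ℝ (Fin 2))
    (hc : ∀ θ, c θ = (WithLp.equiv 2 (Fin 2 → ℝ)).symm ![Real.cos θ, Real.sin θ])
    (θ φ : ℝ) :
    ‖(N (c θ))⁻¹ • c θ - (N (c φ))⁻¹ • c φ‖ ≤ K ^ 2 * ‖c θ - c φ‖ := by
  have hc_norm : ∀ α, ‖c α‖ = 1 := fun α => by
    simp [hc, EuclideanSpace.norm_eq, Fin.sum_univ_two]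
  exact norm_inv_smul_sub_inv_smul_le hN_add hN_smul hNE hKE (hc_norm θ) (hc_norm φ)

theorem stmt11 (N : EuclideanSpace ℝ (Fin 2) → ℝ)
    (hN_add : ∀ v w, N (v + w) ≤ N v + N w)
    (hN_smul : ∀ (a : ℝ) (w : EuclideanSpace ℝ (Fin 2)), N (a • w) = |a| * N w)
    (hN_def : ∀ w, N w = 0 → w = 0)
    (hNE : ∀ w, N w ≤ ‖w‖)
    (K : ℝ) (hK : 1 ≤ K) (hKE : ∀ w, ‖w‖ ≤ K * N w)
    (c : ℝ → EuclideanSpace ℝ (Fin 2))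
    (hc : ∀ θ, c θ = (WithLp.equiv 2 (Fin 2 → ℝ)).symm ![Real.cos θ, Real.sin θ])
    (θ φ : ℝ) (hθφ : |θ - φ| ≤ Real.arccos K⁻¹) :
    ‖(N (c θ))⁻¹ • c θ - (N (c φ))⁻¹ • c φ‖ ≤ K ^ 2 * ‖c θ - c φ‖ :=
  stmt11_general N hN_add hN_smul hNE K hKE c hc θ φ
end

section
/- For every 2-dimensional real normed space W there is a Euclidean norm ‖·‖_E on W (arising from an inner product) such that ‖w‖_W ≤ ‖w‖_E ≤ √2·‖w‖_W for all w ∈ W. -/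
noncomputable section
namespace Stmt13Aux

def qf (a b c : ℝ) (z : ℝ × ℝ) : ℝ := a * z.1^2 + 2*b*z.1*z.2 + c*z.2^2
def bf (a b c : ℝ) (z w : ℝ × ℝ) : ℝ := a*z.1*w.1 + b*(z.1*w.2 + z.2*w.1) + c*z.2*w.2

lemma qf_smul (a b c t : ℝ) (z : ℝ × ℝ) : qf a b c (t • z) = t^2 * qf a b c z := by
  simp [qf, Prod.smul_fst, Prod.smul_snd, smul_eq_mul]; ring

lemma qf_neg (a b c : ℝ) (z : ℝ × ℝ) : qf a b c (-z) = qf a b c z := by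
  simp [qf]

lemma qf_zero (a b c : ℝ) : qf a b c 0 = 0 := by simp [qf]

lemma bf_self (a b c : ℝ) (z : ℝ × ℝ) : bf a b c z z = qf a b c z := by
  simp [qf, bf]; ring

lemma bf_comm (a b c : ℝ) (z w : ℝ × ℝ) : bf a b c z w = bf a b c w z := by
  simp [bf]; ring

lemma bf_neg_left (a b c : ℝ) (z w : ℝ × ℝ) : bf a b c (-z) w = -bf a b c z w := by
  simp [bf]; ring

lemma bf_add_left (a b c : ℝ) (z z' w : ℝ × ℝ) :
    bf a b c (z + z') w = bf a b c z w + bf a b c z' w := by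
  simp [bf, Prod.fst_add, Prod.snd_add]; ring

lemma bf_smul_left (a b c t : ℝ) (z w : ℝ × ℝ) : bf a b c (t • z) w = t * bf a b c z w := by
  simp [bf, Prod.smul_fst, Prod.smul_snd, smul_eq_mul]; ring

lemma qf_sub_smul (a b c t : ℝ) (z e : ℝ × ℝ) :
    qf a b c (z - t • e) = qf a b c z - 2*t*bf a b c z e + t^2 * qf a b c e := by
  simp [qf, bf, Prod.smul_fst, Prod.smul_snd, smul_eq_mul, Prod.fst_sub, Prod.snd_sub]; ring

lemma disk (u x2 y2 : ℝ) (hu : 2 < u) (hx2 : 0 ≤ x2) (h1 : x2*u ≤ 1)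
    (hy : y2 = u/(2*(u-1)) * (1 - x2/(u/2))) : x2 + y2 ≤ 1 := by
  have h0 : 0 < u := by linarith
  have h1' : 0 < u-1 := by linarith
  have h2 : 2*x2 ≤ 1 := by nlinarith
  have key : 1 - x2 - y2 = u*(u-2)*(1-2*x2) / (4*(u/2)*(u-1)) := by
    rw [hy]; field_simp; ring
  nlinarith [div_nonneg (by nlinarith : (0:ℝ) ≤ u*(u-2)*(1-2*x2))
      (by positivity : (0:ℝ) ≤ 4*(u/2)*(u-1))]

lemma tangent (s x y2 t : ℝ) (hu : 2 < s^2) (hy : y2 = s^2/(2*(s^2-1)) * (1 - x^2/(s^2/2)))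
    (ht : t = (x*s-1)/(s^2-1)) : (x - t*s)^2 + y2 ≤ (1-t)^2 := by
  have h1' : 0 < s^2 - 1 := by nlinarith
  have hs0 : s ≠ 0 := by intro h; rw [h] at hu; norm_num at hu
  have key : (1-t)^2 - ((x-t*s)^2 + y2) = (2*x-s)^2/(2*(s^2-1)) := by
    rw [hy, ht]; field_simp; ring
  nlinarith [div_nonneg (sq_nonneg (2*x-s)) (by positivity : (0:ℝ) ≤ 2*(s^2-1))]

lemma detid (a0 b0 c0 e1 e2 ic K : ℝ) (h : a0*e1^2 + 2*b0*e1*e2 + c0*e2^2 = 1) :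
    (a0*ic + K*(a0*e1+b0*e2)^2) * (c0*ic + K*(b0*e1+c0*e2)^2)
      - (b0*ic + K*(a0*e1+b0*e2)*(b0*e1+c0*e2))^2
    = (a0*c0 - b0^2) * (ic^2 + ic*K) := by
  linear_combination (ic*K*(a0*c0-b0^2)) * h

set_option maxHeartbeats 2000000 in
/-- John's theorem for a 2-dimensional norm `N` given on `ℝ × ℝ`. -/
lemma john2 (N : ℝ × ℝ → ℝ) (ε C : ℝ) (hε0 : 0 < ε)
    (hNsmul : ∀ (t : ℝ) (z), N (t • z) = |t| * N z)
    (hNadd : ∀ z w, N (z + w) ≤ N z + N w)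
    (hlow : ∀ z, ε * ‖z‖ ≤ N z)
    (hhigh : ∀ z, N z ≤ C * ‖z‖) :
    ∃ a b c : ℝ, (∀ z, (N z)^2 ≤ qf a b c z) ∧ (∀ z, qf a b c z ≤ 2 * (N z)^2) := by
  have hN0 : ∀ z, 0 ≤ N z := fun z => le_trans (mul_nonneg hε0.le (norm_nonneg z)) (hlow z)
  have hNpos : ∀ z, z ≠ 0 → 0 < N z := fun z hz =>
    lt_of_lt_of_le (mul_pos hε0 (norm_pos_iff.mpr hz)) (hlow z)
  have hNneg : ∀ z, N (-z) = N z := by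
    intro z
    have h := hNsmul (-1) z
    rw [neg_one_smul] at h
    rw [h]
    simp
  have hC0 : 0 < C := by
    have h1 := hlow (1, 0)
    have h2 := hhigh (1, 0)
    have h3 : ‖((1:ℝ), (0:ℝ))‖ = 1 := by
      rw [Prod.norm_def]; simp
    rw [h3] at h1 h2
    nlinarith
  have hnorm_eq : ∀ z : ℝ × ℝ, ‖z‖ = max |z.1| |z.2| := by
    intro z; rw [Prod.norm_def]; rfl
  have hsq1 : ∀ z : ℝ × ℝ, ‖z‖^2 ≤ z.1^2 + z.2^2 := by
    intro z
    rcases max_cases |z.1| |z.2| with ⟨h, _⟩ | ⟨h, _⟩ <;>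
      rw [hnorm_eq, h] <;> nlinarith [sq_abs z.1, sq_abs z.2, sq_nonneg z.1, sq_nonneg z.2]
  have hsq2 : ∀ z : ℝ × ℝ, z.1^2 + z.2^2 ≤ 2 * ‖z‖^2 := by
    intro z
    have h1 : |z.1| ≤ ‖z‖ := by rw [hnorm_eq]; exact le_max_left _ _
    have h2 : |z.2| ≤ ‖z‖ := by rw [hnorm_eq]; exact le_max_right _ _
    nlinarith [sq_abs z.1, sq_abs z.2, abs_nonneg z.1, abs_nonneg z.2, norm_nonneg z]
  set δ : ℝ := ε^2/2 with hδdef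
  have hδ0 : 0 < δ := by positivity
  clear_value δ
  set S : Set (ℝ × ℝ × ℝ) := {p | ∀ z, (N z)^2 ≤ qf p.1 p.2.1 p.2.2 z} with hSdef
  set D : ℝ × ℝ × ℝ → ℝ := fun p => p.1 * p.2.2 - p.2.1^2 with hDdef
  have hDcont : Continuous D := by
    rw [hDdef]; fun_prop
  have hSlb : ∀ p ∈ S, ∀ z : ℝ × ℝ, δ * (z.1^2 + z.2^2) ≤ qf p.1 p.2.1 p.2.2 z := by
    intro p hp z
    have h1 := hlow z
    have h2 := hp z
    have h3 := mul_le_mul_of_nonneg_left (hsq2 z) hδ0.le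
    have h4 : δ * (2 * ‖z‖^2) = (ε * ‖z‖)^2 := by rw [hδdef]; ring
    have h5 : (ε * ‖z‖)^2 ≤ (N z)^2 := by
      apply pow_le_pow_left₀ (by positivity) h1
    linarith
  have hSfacts : ∀ p ∈ S, δ ≤ p.1 ∧ δ ≤ p.2.2 ∧ p.2.1^2 ≤ (p.1 - δ) * (p.2.2 - δ) := by
    rintro ⟨a, b, c⟩ hp
    have h1 := hSlb _ hp (1, 0)
    have h2 := hSlb _ hp (0, 1)
    simp only [qf] at h1 h2
    norm_num at h1 h2
    refine ⟨h1, h2, ?_⟩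
    have hd : discrim (a - δ) (2*b) (c - δ) ≤ 0 := by
      apply discrim_le_zero
      intro x
      have h3 := hSlb _ hp (x, 1)
      simp only [qf] at h3
      norm_num at h3
      nlinarith
    rw [discrim] at hd
    nlinarith
  have hw0S : (C^2, (0:ℝ), C^2) ∈ S := by
    intro z
    have h1 := hhigh z
    have h2 := hsq1 z
    simp only [qf]
    nlinarith [hN0 z, norm_nonneg z]
  have hw0D : D (C^2, (0:ℝ), C^2) ≤ C^4 := by
    rw [hDdef]
    norm_num
    exact le_of_eq (by ring)
  set R : ℝ := (C^4 + δ^2)/δ + 1 with hRdef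
  clear_value R
  set K : Set (ℝ × ℝ × ℝ) := {p | p ∈ S ∧ D p ≤ C^4} with hKdef
  have hKbd : ∀ p ∈ K, δ ≤ p.1 ∧ p.1 ≤ R ∧ |p.2.1| ≤ R ∧ δ ≤ p.2.2 ∧ p.2.2 ≤ R := by
    rintro ⟨a, b, c⟩ ⟨hpS, hpD⟩
    obtain ⟨ha, hc, hb⟩ := hSfacts _ hpS
    simp only [hDdef] at hpD
    simp only at ha hc hb ⊢
    have hsum : a + c ≤ (C^4 + δ^2)/δ := by
      rw [le_div_iff₀ hδ0]
      nlinarith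
    have haR : a ≤ R := by rw [hRdef]; linarith
    have hcR : c ≤ R := by rw [hRdef]; linarith
    have hR0 : 0 < R := by linarith
    have hb2 : b^2 ≤ R^2 := by nlinarith
    exact ⟨ha, haR, by nlinarith [sq_abs b, abs_nonneg b], hc, hcR⟩
  have hKsub : K ⊆ Metric.closedBall 0 R := by
    rintro p hp
    obtain ⟨ha, haR, hbR, hc, hcR⟩ := hKbd _ hp
    simp only [Metric.mem_closedBall, dist_zero_right]
    rw [Prod.norm_def, Prod.norm_def]
    simp only [Real.norm_eq_abs]
    apply max_le
    · rw [abs_of_pos (lt_of_lt_of_le hδ0 ha)]; exact haR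
    · exact max_le hbR (by rw [abs_of_pos (lt_of_lt_of_le hδ0 hc)]; exact hcR)
  have hSclosed : IsClosed S := by
    have hrw : S = ⋂ z : ℝ × ℝ, {p : ℝ × ℝ × ℝ | (N z)^2 ≤ qf p.1 p.2.1 p.2.2 z} := by
      ext p; simp [hSdef, Set.mem_iInter]
    rw [hrw]
    exact isClosed_iInter fun z => isClosed_le continuous_const (by unfold qf; fun_prop)
  have hKclosed : IsClosed K := by
    have hrw : K = S ∩ {p | D p ≤ C^4} := rfl
    rw [hrw]
    exact hSclosed.inter (isClosed_le hDcont continuous_const)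
  have hKcpt : IsCompact K :=
    (isCompact_closedBall (0 : ℝ × ℝ × ℝ) R).of_isClosed_subset hKclosed hKsub
  have hKne : K.Nonempty := ⟨(C^2, 0, C^2), hw0S, hw0D⟩
  obtain ⟨p0, hp0K, hp0min⟩ := hKcpt.exists_isMinOn hKne hDcont.continuousOn
  obtain ⟨a0, b0, c0⟩ := p0
  obtain ⟨hp0S, hp0D⟩ := hp0K
  have hS0 : ∀ z, (N z)^2 ≤ qf a0 b0 c0 z := hp0S
  have hminS : ∀ p ∈ S, a0*c0 - b0^2 ≤ D p := by
    intro p hp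
    have e1 : D (a0, b0, c0) = a0*c0 - b0^2 := rfl
    by_cases h : D p ≤ C^4
    · have h3 := hp0min (⟨hp, h⟩ : p ∈ K)
      rw [e1] at h3
      exact h3
    · have h2 := hp0min (⟨hw0S, hw0D⟩ : (C^2, (0:ℝ), C^2) ∈ K)
      rw [e1] at h2
      linarith [hw0D, (not_le.mp h).le]
  obtain ⟨hδa, hδc, hb2⟩ := hSfacts _ hp0S
  simp only at hδa hδc hb2
  have hdet0 : 0 < a0*c0 - b0^2 := by nlinarith only [hδa, hδc, hb2, hδ0]
  have hmain : ∀ z, qf a0 b0 c0 z ≤ 2 * (N z)^2 := by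
    by_contra hcon
    push_neg at hcon
    obtain ⟨w, hw⟩ := hcon
    have hwne : w ≠ 0 := by
      rintro rfl
      rw [qf_zero] at hw
      nlinarith only [hw, sq_nonneg (N 0)]
    have hNw : 0 < N w := hNpos w hwne
    have hQw : 0 < qf a0 b0 c0 w := lt_of_le_of_lt (by positivity) hw
    set r : ℝ := Real.sqrt (qf a0 b0 c0 w) with hrdef
    clear_value r
    have hr0 : 0 < r := by rw [hrdef]; exact Real.sqrt_pos.mpr hQw
    have hr2 : r^2 = qf a0 b0 c0 w := by rw [hrdef]; exact Real.sq_sqrt hQw.le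
    set e : ℝ × ℝ := r⁻¹ • w with hedef
    clear_value e
    have hq0e : qf a0 b0 c0 e = 1 := by
      rw [hedef, qf_smul, ← hr2]
      field_simp [hr0.ne']
    have hNe : N e = N w / r := by
      rw [hedef, hNsmul, abs_of_pos (inv_pos.mpr hr0)]
      ring
    set s : ℝ := r / N w with hsdef
    clear_value s
    have hs0 : 0 < s := by rw [hsdef]; exact div_pos hr0 hNw
    have hsNe : s * N e = 1 := by
      rw [hNe, hsdef]; field_simp [hr0.ne', hNw.ne']
    have hu : 2 < s^2 := by
      rw [hsdef, div_pow, hr2, lt_div_iff₀ (pow_pos hNw 2)]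
      linarith
    have hu1 : (0:ℝ) < s^2 - 1 := by linarith only [hu]
    set c2 : ℝ := s^2/(2*(s^2-1)) with hc2def
    clear_value c2
    set a2 : ℝ := s^2/2 with ha2def
    clear_value a2
    have hc2pos : 0 < c2 := by
      rw [hc2def]; exact div_pos (by nlinarith only [hu]) (by linarith only [hu1])
    have ha2pos : 0 < a2 := by
      rw [ha2def]; exact div_pos (by nlinarith only [hu]) (by norm_num)
    have hc2a2 : c2 ≤ a2 := by
      rw [hc2def, ha2def, div_le_div_iff₀ (by linarith only [hu1]) (by norm_num)]
      nlinarith only [hu, sq_nonneg s, mul_nonneg (sq_nonneg s) (by linarith only [hu] : (0:ℝ) ≤ s^2 - 2)]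
    set Kk : ℝ := 1/a2 - 1/c2 with hKkdef
    clear_value Kk
    set q1 : ℝ × ℝ → ℝ := fun z => qf a0 b0 c0 z / c2 + Kk * (bf a0 b0 c0 z e)^2 with hq1def
    clear_value q1
    have hCS : ∀ z, (bf a0 b0 c0 z e)^2 ≤ qf a0 b0 c0 z := by
      intro z
      have h1 := hS0 (z - (bf a0 b0 c0 z e) • e)
      have h2 := qf_sub_smul a0 b0 c0 (bf a0 b0 c0 z e) z e
      rw [hq0e] at h2
      linarith only [h1, h2, sq_nonneg (N (z - (bf a0 b0 c0 z e) • e))]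
    have hq1lb : ∀ z, qf a0 b0 c0 z / a2 ≤ q1 z := by
      intro z
      have hkey : q1 z - qf a0 b0 c0 z / a2
          = (qf a0 b0 c0 z - (bf a0 b0 c0 z e)^2) * (1/c2 - 1/a2) := by
        rw [hq1def, hKkdef]; ring
      have h1 : 0 ≤ 1/c2 - 1/a2 := by
        rw [sub_nonneg]
        exact one_div_le_one_div_of_le hc2pos hc2a2
      have h2 : 0 ≤ (qf a0 b0 c0 z - (bf a0 b0 c0 z e)^2) * (1/c2 - 1/a2) :=
        mul_nonneg (by linarith only [hCS z]) h1
      linarith only [hkey, h2]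
    have keyA : ∀ z, q1 z = 1 → 0 ≤ bf a0 b0 c0 z e → N z ≤ 1 := by
      intro z h1 hx0
      set x : ℝ := bf a0 b0 c0 z e with hxdef
      clear_value x
      set Q : ℝ := qf a0 b0 c0 z with hQdef
      clear_value Q
      have hy : Q - x^2 = s^2/(2*(s^2-1)) * (1 - x^2/(s^2/2)) := by
        rw [hq1def] at h1
        simp only at h1
        rw [← hxdef, ← hQdef] at h1
        have h1' : Q/c2 = 1 - Kk*x^2 := by linarith only [h1]
        have hQeq : Q = (1 - Kk*x^2) * c2 := (div_eq_iff hc2pos.ne').mp h1'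
        have hne1 : s^2 - 1 ≠ 0 := ne_of_gt hu1
        rw [hQeq, hKkdef, hc2def, ha2def]
        field_simp
        ring
      have hx2a : x^2 ≤ s^2/2 := by
        have h2 : 0 ≤ Q - x^2 := by
          rw [hQdef, hxdef]; linarith [hCS z]
        rw [hy] at h2
        have h3 : 0 ≤ 1 - x^2/(s^2/2) := by
          have h4 : 0 < s^2/(2*(s^2-1)) := div_pos (by nlinarith only [hu]) (by linarith only [hu1])
          nlinarith only [h2, h4]
        rw [sub_nonneg, div_le_one (by linarith only [hu] : (0:ℝ) < s^2/2)] at h3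
        exact h3
      by_cases hxs : x * s ≤ 1
      · have hQ1 : Q ≤ 1 := by
          have := disk (s^2) (x^2) (Q - x^2) hu (sq_nonneg x)
            (by nlinarith only [hxs, mul_nonneg hx0 hs0.le]) hy
          linarith only [this]
        nlinarith only [hS0 z, hN0 z, hQ1, hQdef]
      · push_neg at hxs
        set t : ℝ := (x*s - 1)/(s^2 - 1) with htdef
        clear_value t
        have ht0 : 0 ≤ t := by
          rw [htdef]; exact div_nonneg (by linarith only [hxs]) hu1.le
        have ht1 : t < 1 := by
          rw [htdef, div_lt_one hu1]
          nlinarith only [hx2a, hxs, hu, mul_pos hs0 hs0]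
        have h1t : (0:ℝ) < 1 - t := by linarith
        have htan := tangent s x (Q - x^2) t hu hy htdef
        set w' : ℝ × ℝ := (1-t)⁻¹ • (z - (t*s) • e) with hw'def
        clear_value w'
        have hQw' : qf a0 b0 c0 w' ≤ 1 := by
          rw [hw'def, qf_smul, qf_sub_smul, hq0e]
          have hexp : qf a0 b0 c0 z - 2*(t*s)*bf a0 b0 c0 z e + (t*s)^2*1
              = (x - t*s)^2 + (Q - x^2) := by rw [← hxdef, ← hQdef]; ring
          rw [hexp, inv_pow, inv_mul_le_iff₀ (pow_pos h1t 2), mul_one]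
          exact htan
        have hNw' : N w' ≤ 1 := by nlinarith only [hS0 w', hN0 w', hQw']
        have hzdec : z = (1-t) • w' + (t*s) • e := by
          rw [hw'def, smul_smul, mul_inv_cancel₀ (ne_of_gt h1t), one_smul, sub_add_cancel]
        calc N z = N ((1-t) • w' + (t*s) • e) := by rw [← hzdec]
          _ ≤ N ((1-t) • w') + N ((t*s) • e) := hNadd _ _
          _ = (1-t) * N w' + (t*s) * N e := by
              rw [hNsmul, hNsmul, abs_of_pos h1t,
                abs_of_nonneg (mul_nonneg ht0 hs0.le)]
          _ ≤ (1-t) * 1 + t * (s * N e) := by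
              have h5 := mul_le_mul_of_nonneg_left hNw' h1t.le
              nlinarith only [h5]
          _ = 1 := by rw [hsNe]; ring
    have keyA' : ∀ z, q1 z = 1 → N z ≤ 1 := by
      intro z h1
      rcases le_or_gt 0 (bf a0 b0 c0 z e) with h | h
      · exact keyA z h1 h
      · have hq1neg : q1 (-z) = 1 := by
          rw [hq1def]
          simp only
          rw [qf_neg, bf_neg_left]
          rw [hq1def] at h1
          simp only at h1
          rw [← h1]
          ring
        have hbneg : 0 ≤ bf a0 b0 c0 (-z) e := by
          rw [bf_neg_left]; linarith only [h]
        have := keyA (-z) hq1neg hbneg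
        rwa [hNneg] at this
    have hq1smul : ∀ (ρ : ℝ) (z), q1 (ρ • z) = ρ^2 * q1 z := by
      intro ρ z
      rw [hq1def]
      simp only
      rw [qf_smul, bf_smul_left]
      ring
    have hq1S : ∀ z, (N z)^2 ≤ q1 z := by
      intro z
      rcases eq_or_ne z 0 with rfl | hz
      · have hN00 : N 0 = 0 := by
          have := hNsmul 0 0
          simpa using this
        have hbf0 : bf a0 b0 c0 0 e = 0 := by simp [bf]
        rw [hN00, hq1def]
        simp only
        rw [hbf0, qf_zero]
        norm_num
      · have hq1pos : 0 < q1 z :=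
          lt_of_lt_of_le
            (div_pos (lt_of_lt_of_le (pow_pos (hNpos z hz) 2) (hS0 z)) ha2pos)
            (hq1lb z)
        set ρ : ℝ := Real.sqrt (q1 z) with hρdef
        clear_value ρ
        have hρ0 : 0 < ρ := by rw [hρdef]; exact Real.sqrt_pos.mpr hq1pos
        have hρ2 : ρ^2 = q1 z := by rw [hρdef]; exact Real.sq_sqrt hq1pos.le
        have hone : q1 (ρ⁻¹ • z) = 1 := by
          rw [hq1smul, ← hρ2]; field_simp [hρ0.ne']
        have hle := keyA' _ hone
        rw [hNsmul, abs_of_pos (inv_pos.mpr hρ0)] at hle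
        have hNle : N z ≤ ρ := by
          rw [inv_mul_le_iff₀ hρ0, mul_one] at hle
          exact hle
        nlinarith only [hNle, hρ2, hN0 z]
    set a1 : ℝ := a0*(1/c2) + Kk*(a0*e.1+b0*e.2)^2 with ha1def
    clear_value a1
    set b1 : ℝ := b0*(1/c2) + Kk*(a0*e.1+b0*e.2)*(b0*e.1+c0*e.2) with hb1def
    clear_value b1
    set c1 : ℝ := c0*(1/c2) + Kk*(b0*e.1+c0*e.2)^2 with hc1def
    clear_value c1
    have hq1eq : ∀ z, qf a1 b1 c1 z = q1 z := by
      intro z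
      rw [hq1def, ha1def, hb1def, hc1def]
      simp only [qf, bf]
      field_simp [hc2pos.ne']
      ring
    have hS1 : (a1, b1, c1) ∈ S := by
      intro z
      simp only
      rw [hq1eq z]
      exact hq1S z
    have hdet1 : a1*c1 - b1^2 = (a0*c0 - b0^2) * ((1/c2)^2 + (1/c2)*Kk) := by
      rw [ha1def, hb1def, hc1def]
      exact detid a0 b0 c0 e.1 e.2 (1/c2) Kk (by simpa [qf] using hq0e)
    have hfac : (1/c2)^2 + (1/c2)*Kk = 1/(a2*c2) := by
      rw [hKkdef]
      field_simp
      ring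
    have hac : 1 < a2 * c2 := by
      rw [ha2def, hc2def]
      rw [div_mul_div_comm, lt_div_iff₀ (by linarith only [hu1] : (0:ℝ) < 2*(2*(s^2-1)))]
      have h22 : (0:ℝ) < s^2 - 2 := by linarith only [hu]
      nlinarith only [mul_pos h22 h22]
    have hlt : a1*c1 - b1^2 < a0*c0 - b0^2 := by
      rw [hdet1, hfac, mul_one_div]
      exact div_lt_self hdet0 hac
    have hfin := hminS (a1, b1, c1) hS1
    have e2 : D (a1, b1, c1) = a1*c1 - b1^2 := rfl
    rw [e2] at hfin
    linarith only [hfin, hlt]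
  exact ⟨a0, b0, c0, hS0, hmain⟩

end Stmt13Aux

open Stmt13Aux

theorem stmt13 {W : Type*} [NormedAddCommGroup W] [NormedSpace ℝ W]
    (hdim : Module.finrank ℝ W = 2) :
    ∃ p : W →ₗ[ℝ] W →ₗ[ℝ] ℝ,
      (∀ v w, p v w = p w v) ∧ (∀ w, w ≠ 0 → 0 < p w w) ∧
      ∀ w, ‖w‖ ≤ Real.sqrt (p w w) ∧ Real.sqrt (p w w) ≤ Real.sqrt 2 * ‖w‖ := by
  classical
  have hfd : FiniteDimensional ℝ W := FiniteDimensional.of_finrank_pos (by omega)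
  have hdim' : Module.finrank ℝ (ℝ × ℝ) = Module.finrank ℝ W := by simp [hdim]
  let L : (ℝ × ℝ) ≃L[ℝ] W :=
    (LinearEquiv.ofFinrankEq (ℝ × ℝ) W hdim').toContinuousLinearEquiv
  obtain ⟨a0, b0, c0, hS0, hmain⟩ :
      ∃ a b c : ℝ, (∀ z, ‖L z‖^2 ≤ qf a b c z) ∧ (∀ z, qf a b c z ≤ 2 * ‖L z‖^2) := by
    set Ms : ℝ := ‖(L.symm : W →L[ℝ] ℝ × ℝ)‖ + 1 with hMsdef
    have hMs0 : 0 < Ms := by positivity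
    apply john2 (fun z => ‖L z‖) Ms⁻¹ ‖(L : (ℝ × ℝ) →L[ℝ] W)‖ (by positivity)
    · intro t z; simp [map_smul, norm_smul]
    · intro z w; simp only [map_add]; exact norm_add_le _ _
    · intro z
      have h1 : ‖z‖ ≤ Ms * ‖L z‖ := by
        calc ‖z‖ = ‖L.symm (L z)‖ := by simp
        _ ≤ ‖(L.symm : W →L[ℝ] ℝ × ℝ)‖ * ‖L z‖ := (L.symm : W →L[ℝ] ℝ × ℝ).le_opNorm _
        _ ≤ Ms * ‖L z‖ := by
            apply mul_le_mul_of_nonneg_right (by simp [hMsdef]) (norm_nonneg _)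
      rw [inv_mul_le_iff₀ hMs0]
      exact h1
    · intro z; exact (L : (ℝ × ℝ) →L[ℝ] W).le_opNorm z
  set G : W →ₗ[ℝ] ℝ × ℝ := ((L.symm : W →L[ℝ] ℝ × ℝ) : W →ₗ[ℝ] ℝ × ℝ) with hGdef
  have hGN : ∀ w : W, ‖L (G w)‖ = ‖w‖ := by
    intro w
    have : L (G w) = w := L.apply_symm_apply w
    rw [this]
  refine ⟨LinearMap.mk₂ ℝ (fun v w => bf a0 b0 c0 (G v) (G w))
      (fun v v' w => by
        show bf a0 b0 c0 (G (v + v')) (G w) = bf a0 b0 c0 (G v) (G w) + bf a0 b0 c0 (G v') (G w)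
        rw [map_add, bf_add_left])
      (fun c v w => by
        show bf a0 b0 c0 (G (c • v)) (G w) = c • bf a0 b0 c0 (G v) (G w)
        rw [map_smul, bf_smul_left, smul_eq_mul])
      (fun v w w' => by
        show bf a0 b0 c0 (G v) (G (w + w')) = bf a0 b0 c0 (G v) (G w) + bf a0 b0 c0 (G v) (G w')
        rw [bf_comm, map_add, bf_add_left, bf_comm a0 b0 c0 (G w),
          bf_comm a0 b0 c0 (G w')])
      (fun c v w => by
        show bf a0 b0 c0 (G v) (G (c • w)) = c • bf a0 b0 c0 (G v) (G w)
        rw [bf_comm, map_smul, bf_smul_left, bf_comm, smul_eq_mul]), ?_, ?_, ?_⟩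
  · intro v w
    simp only [LinearMap.mk₂_apply]
    exact bf_comm _ _ _ _ _
  · intro w hw
    simp only [LinearMap.mk₂_apply]
    rw [bf_self]
    have h1 := hS0 (G w)
    rw [hGN] at h1
    have h2 : 0 < ‖w‖ := norm_pos_iff.mpr hw
    nlinarith only [h1, h2]
  · intro w
    simp only [LinearMap.mk₂_apply]
    rw [bf_self]
    have h1 := hS0 (G w)
    have h2 := hmain (G w)
    rw [hGN] at h1 h2
    constructor
    · have h3 := Real.sqrt_le_sqrt h1
      rwa [Real.sqrt_sq (norm_nonneg w)] at h3
    · have h3 := Real.sqrt_le_sqrt h2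
      rwa [Real.sqrt_mul (by norm_num) (‖w‖^2), Real.sqrt_sq (norm_nonneg w)] at h3
end
end

section
/- Let ‖·‖_X be a norm on ℝ² with B_E ⊆ B_X ⊆ K·B_E, K ≥ 1. Let x, y ∈ S_X with the angle between rays r_{0,x} and r_{0,y} at most arccos(1/K), let x^⊥ ∈ S_E ∩ {x}^⊥ with ⟨x^⊥, y⟩ ≥ 0, and v := x + x^⊥. Then the angle between the rays r_{x,v} and r_{x,y} is at most arccos(1/K). -/
open Set Real
open scoped RealInnerProductSpace

/-!
Write `b = ⟪x^⊥, y⟫`; since `⟪x^⊥, y - x⟫ = b`, the claim is `‖y - x‖ ≤ K b`, and in the plane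
`‖x‖ b` is the area `|det (x, y)|`.

If `⟪x, y⟫ ≥ 1`: for `0 ≤ t ≤ 1` the triangle inequality for `‖·‖_X` and `B_E ⊆ B_X` give
`‖y - t x‖ ≥ 1 - t`; minimising the resulting quadratic in `t` yields the reverse Cauchy–Schwarz
inequality `(⟪x, y⟫ - 1)² ≤ (‖x‖² - 1)(‖y‖² - 1)`, which says that the line through `x` and `y`
avoids the open Euclidean unit disc. Its distance `‖x‖ b / ‖y - x‖` from the origin is therefore
at least `1`, so `‖y - x‖ ≤ ‖x‖ b ≤ K b`.

If `⟪x, y⟫ ≤ 1`, the angle hypothesis together with `‖y‖ ≥ 1` and `‖x‖ ≤ K` already suffices.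
-/

lemma sq_le_mul_of_forall_mem_Icc_nonneg {B q c : ℝ} (hB : 0 ≤ B) (hBq : B ≤ q)
    (h : ∀ t ∈ Icc (0 : ℝ) 1, 0 ≤ c - 2 * t * B + t ^ 2 * q) : B ^ 2 ≤ c * q := by
  rcases (hB.trans hBq).eq_or_lt with hq | hq
  · obtain rfl : B = 0 := by linarith
    simp [← hq]
  · have hmin := h (B / q) ⟨div_nonneg hB hq.le, (div_le_one hq).2 hBq⟩
    have hval : c - 2 * (B / q) * B + (B / q) ^ 2 * q = c - B ^ 2 / q := by
      field_simp
      ring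
    rwa [hval, sub_nonneg, div_le_iff₀ hq] at hmin

lemma one_sub_le_norm_sub_smul {F : Type*} [SeminormedAddCommGroup F] [Module ℝ F]
    {N : F → ℝ} (hN_add : ∀ v w, N (v + w) ≤ N v + N w)
    (hN_smul : ∀ (a : ℝ) (w : F), N (a • w) = |a| * N w) (hNE : ∀ w, N w ≤ ‖w‖)
    {x y : F} (hx : N x = 1) (hy : N y = 1) {t : ℝ} (ht : 0 ≤ t) : 1 - t ≤ ‖y - t • x‖ := by
  have h := hN_add (t • x) (y - t • x)
  rw [add_sub_cancel, hy, hN_smul, hx, abs_of_nonneg ht, mul_one] at h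
  linarith [hNE (y - t • x)]

lemma le_of_arccos_le_arccos {x y : ℝ} (hx : -1 ≤ x) (hy : y ≤ 1) (h : arccos x ≤ arccos y) :
    y ≤ x :=
  not_lt.1 fun hxy => (arccos_lt_arccos hx hxy hy).not_ge h

section InnerProductSpace

variable {E : Type*} [NormedAddCommGroup E] [InnerProductSpace ℝ E]

lemma sq_inner_sub_one_le_of_forall_one_sub_le_norm_sub_smul {x y : E}
    (h : ∀ t ∈ Icc (0 : ℝ) 1, 1 - t ≤ ‖y - t • x‖) (h1 : 1 ≤ ⟪x, y⟫) (h2 : ⟪x, y⟫ ≤ ‖x‖ ^ 2) :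
    (⟪x, y⟫ - 1) ^ 2 ≤ (‖y‖ ^ 2 - 1) * (‖x‖ ^ 2 - 1) := by
  refine sq_le_mul_of_forall_mem_Icc_nonneg (by linarith) (by linarith) fun t ht => ?_
  have hsq : (1 - t) ^ 2 ≤ ‖y - t • x‖ ^ 2 :=
    pow_le_pow_left₀ (by linarith [ht.2]) (h t ht) 2
  rw [norm_sub_sq_real, real_inner_smul_right, norm_smul, Real.norm_eq_abs, abs_of_nonneg ht.1,
    real_inner_comm] at hsq
  nlinarith

lemma norm_sub_sq_le_of_one_le_inner {x y : E}
    (hxy : ∀ t ∈ Icc (0 : ℝ) 1, 1 - t ≤ ‖y - t • x‖)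
    (hyx : ∀ t ∈ Icc (0 : ℝ) 1, 1 - t ≤ ‖x - t • y‖) (h1 : 1 ≤ ⟪x, y⟫) :
    ‖y - x‖ ^ 2 ≤ ‖x‖ ^ 2 * ‖y‖ ^ 2 - ⟪x, y⟫ ^ 2 := by
  have hrev : (⟪x, y⟫ - 1) ^ 2 ≤ (‖y‖ ^ 2 - 1) * (‖x‖ ^ 2 - 1) := by
    rcases le_or_gt ⟪x, y⟫ (‖x‖ ^ 2) with hx | hx
    · exact sq_inner_sub_one_le_of_forall_one_sub_le_norm_sub_smul hxy h1 hx
    · have hcs : ⟪x, y⟫ ^ 2 ≤ ‖x‖ ^ 2 * ‖y‖ ^ 2 := by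
        rw [← mul_pow]
        exact pow_le_pow_left₀ (by linarith) (real_inner_le_norm x y) 2
      have hy : ⟪y, x⟫ ≤ ‖y‖ ^ 2 := by
        rw [real_inner_comm]
        nlinarith
      rw [real_inner_comm] at h1 ⊢
      linarith [sq_inner_sub_one_le_of_forall_one_sub_le_norm_sub_smul hyx h1 hy]
  rw [norm_sub_sq_real, real_inner_comm]
  linarith

lemma sq_norm_mul_sq_norm_sub_le_of_one_le_inner {K : ℝ} {x y : E} (hxK : ‖x‖ ≤ K)
    (hxy : ∀ t ∈ Icc (0 : ℝ) 1, 1 - t ≤ ‖y - t • x‖)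
    (hyx : ∀ t ∈ Icc (0 : ℝ) 1, 1 - t ≤ ‖x - t • y‖) (h1 : 1 ≤ ⟪x, y⟫) :
    ‖x‖ ^ 2 * ‖y - x‖ ^ 2 ≤ K ^ 2 * (‖x‖ ^ 2 * ‖y‖ ^ 2 - ⟪x, y⟫ ^ 2) := by
  have h := norm_sub_sq_le_of_one_le_inner hxy hyx h1
  calc ‖x‖ ^ 2 * ‖y - x‖ ^ 2 ≤ ‖x‖ ^ 2 * (‖x‖ ^ 2 * ‖y‖ ^ 2 - ⟪x, y⟫ ^ 2) := by gcongr
    _ ≤ K ^ 2 * (‖x‖ ^ 2 * ‖y‖ ^ 2 - ⟪x, y⟫ ^ 2) := by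
      gcongr
      exact (sq_nonneg _).trans h

lemma sq_norm_mul_sq_norm_sub_le_of_inner_le_one {K : ℝ} {x y : E} (hx1 : 1 ≤ ‖x‖)
    (hxK : ‖x‖ ≤ K) (hy1 : 1 ≤ ‖y‖) (hang : ‖x‖ * ‖y‖ ≤ K * ⟪x, y⟫) (h1 : ⟪x, y⟫ ≤ 1) :
    ‖x‖ ^ 2 * ‖y - x‖ ^ 2 ≤ K ^ 2 * (‖x‖ ^ 2 * ‖y‖ ^ 2 - ⟪x, y⟫ ^ 2) := by
  rw [norm_sub_sq_real, real_inner_comm]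
  set r := ‖x‖
  set s := ‖y‖
  set A := ⟪x, y⟫
  -- Up to the factor `r²`, the defect is a concave quadratic in `a = A / r` on `[1 / K, 1 / r]`:
  -- `hconcave` is its concave part, `hend₁` and `hend₂` interpolate its values at the two ends.
  have hKA : 0 ≤ K * A - r := by nlinarith
  have hconcave : 0 ≤ K * (K * A - r) * (1 - A) := by
    have : 0 ≤ K := by linarith
    have : 0 ≤ 1 - A := by linarith
    positivity
  have hend₁ : 0 ≤ (K + r) * (r ^ 2 - 1) * (K * A - r) := by
    have : 0 ≤ K + r := by linarith
    have : 0 ≤ r ^ 2 - 1 := by nlinarith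
    positivity
  have hend₂ : 0 ≤ r ^ 2 * (K ^ 2 + K * r - 2) * (1 - A) := by
    have : 0 ≤ K ^ 2 + K * r - 2 := by nlinarith
    have : 0 ≤ 1 - A := by linarith
    positivity
  have hs : 0 ≤ (K ^ 2 - 1) * r ^ 2 * (s ^ 2 - 1) := by
    have : 0 ≤ K ^ 2 - 1 := by nlinarith
    have : 0 ≤ s ^ 2 - 1 := by nlinarith
    positivity
  linear_combination hconcave + hend₁ + hend₂ + hs

lemma inner_sq_add_sq_mul_inner_sq [Fact (Module.finrank ℝ E = 2)] {x xp : E} (hxp : ‖xp‖ = 1)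
    (hperp : ⟪x, xp⟫ = 0) (y : E) :
    ⟪x, y⟫ ^ 2 + ‖x‖ ^ 2 * ⟪xp, y⟫ ^ 2 = ‖x‖ ^ 2 * ‖y‖ ^ 2 := by
  have : FiniteDimensional ℝ E := .of_fact_finrank_eq_two
  let o : Orientation ℝ E (Fin 2) := (Module.finBasisOfFinrankEq ℝ E Fact.out).orientation
  have hω : o.areaForm x xp * o.areaForm x y = ‖x‖ ^ 2 * ⟪xp, y⟫ := by
    simpa [hperp] using o.inner_mul_inner_add_areaForm_mul_areaForm x xp y
  have hωx : o.areaForm x xp ^ 2 = ‖x‖ ^ 2 := by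
    rw [← sq_abs, o.abs_areaForm_of_orthogonal hperp, hxp, mul_one]
  rcases eq_or_ne x 0 with rfl | hx
  · simp
  have hωy : o.areaForm x y ^ 2 = ‖x‖ ^ 2 * ⟪xp, y⟫ ^ 2 := by
    refine mul_left_cancel₀ (pow_ne_zero 2 (norm_ne_zero_iff.2 hx)) ?_
    rw [← hωx, ← mul_pow, hω, hωx]
    ring
  rw [← hωy]
  exact o.inner_sq_add_areaForm_sq x y

lemma norm_sub_le_mul_inner [Fact (Module.finrank ℝ E = 2)] {K : ℝ} {x y xp : E}
    (hx1 : 1 ≤ ‖x‖) (hxK : ‖x‖ ≤ K) (hy1 : 1 ≤ ‖y‖) (hang : ‖x‖ * ‖y‖ ≤ K * ⟪x, y⟫)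
    (hxy : ∀ t ∈ Icc (0 : ℝ) 1, 1 - t ≤ ‖y - t • x‖)
    (hyx : ∀ t ∈ Icc (0 : ℝ) 1, 1 - t ≤ ‖x - t • y‖)
    (hxp : ‖xp‖ = 1) (hperp : ⟪x, xp⟫ = 0) (hside : 0 ≤ ⟪xp, y⟫) :
    ‖y - x‖ ≤ K * ⟪xp, y⟫ := by
  have h : ‖x‖ ^ 2 * ‖y - x‖ ^ 2 ≤ ‖x‖ ^ 2 * (K * ⟪xp, y⟫) ^ 2 := by
    have hPar := inner_sq_add_sq_mul_inner_sq hxp hperp y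
    calc ‖x‖ ^ 2 * ‖y - x‖ ^ 2 ≤ K ^ 2 * (‖x‖ ^ 2 * ‖y‖ ^ 2 - ⟪x, y⟫ ^ 2) := by
          rcases le_total 1 ⟪x, y⟫ with h1 | h1
          · exact sq_norm_mul_sq_norm_sub_le_of_one_le_inner hxK hxy hyx h1
          · exact sq_norm_mul_sq_norm_sub_le_of_inner_le_one hx1 hxK hy1 hang h1
      _ = ‖x‖ ^ 2 * (K * ⟪xp, y⟫) ^ 2 := by rw [← hPar]; ring
  have hK : 0 ≤ K * ⟪xp, y⟫ := mul_nonneg (by linarith) hside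
  exact (pow_le_pow_iff_left₀ (norm_nonneg _) hK two_ne_zero).1
    (le_of_mul_le_mul_left h (by positivity))

end InnerProductSpace

theorem stmt15_general (N : EuclideanSpace ℝ (Fin 2) → ℝ)
    (hN_add : ∀ v w, N (v + w) ≤ N v + N w)
    (hN_smul : ∀ (a : ℝ) (w : EuclideanSpace ℝ (Fin 2)), N (a • w) = |a| * N w)
    (hNE : ∀ w, N w ≤ ‖w‖)
    (K : ℝ) (hK : 1 ≤ K) (hKE : ∀ w, ‖w‖ ≤ K * N w)
    (x y xp : EuclideanSpace ℝ (Fin 2))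
    (hxX : N x = 1) (hyX : N y = 1) (hxy : y ≠ x)
    (hxp : ‖xp‖ = 1) (hperp : ⟪x, xp⟫ = 0) (hside : 0 ≤ ⟪xp, y⟫)
    (v : EuclideanSpace ℝ (Fin 2)) (hv : v = x + xp)
    (hangle : Real.arccos (⟪x, y⟫ / (‖x‖ * ‖y‖)) ≤ Real.arccos K⁻¹) :
    Real.arccos (⟪v - x, y - x⟫ / (‖v - x‖ * ‖y - x‖)) ≤ Real.arccos K⁻¹ := by
  subst hv
  have hK0 : 0 < K := by linarith
  have hx1 : 1 ≤ ‖x‖ := hxX ▸ hNE x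
  have hy1 : 1 ≤ ‖y‖ := hyX ▸ hNE y
  have hxK : ‖x‖ ≤ K := by simpa [hxX] using hKE x
  have hline {u w} (hu : N u = 1) (hw : N w = 1) : ∀ t ∈ Icc (0 : ℝ) 1, 1 - t ≤ ‖w - t • u‖ :=
    fun _ ht => one_sub_le_norm_sub_smul hN_add hN_smul hNE hu hw ht.1
  have hang : ‖x‖ * ‖y‖ ≤ K * ⟪x, y⟫ := by
    have h := le_of_arccos_le_arccos (abs_le.1 (abs_real_inner_div_norm_mul_norm_le_one x y)).1
      (inv_le_one_of_one_le₀ hK) hangle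
    rwa [le_div_iff₀ (by positivity), inv_mul_le_iff₀ hK0] at h
  have : Fact (Module.finrank ℝ (EuclideanSpace ℝ (Fin 2)) = 2) := ⟨finrank_euclideanSpace_fin⟩
  have hb : ‖y - x‖ ≤ K * ⟪xp, y⟫ := norm_sub_le_mul_inner hx1 hxK hy1 hang
    (hline hxX hyX) (hline hyX hxX) hxp hperp hside
  have hyx : 0 < ‖y - x‖ := norm_pos_iff.2 (sub_ne_zero.2 hxy)
  rw [add_sub_cancel_left, hxp, one_mul, inner_sub_right, real_inner_comm x xp, hperp, sub_zero]
  exact arccos_le_arccos (by rwa [le_div_iff₀ hyx, inv_mul_le_iff₀ hK0])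

theorem stmt15 (N : EuclideanSpace ℝ (Fin 2) → ℝ)
    (hN_add : ∀ v w, N (v + w) ≤ N v + N w)
    (hN_smul : ∀ (a : ℝ) (w : EuclideanSpace ℝ (Fin 2)), N (a • w) = |a| * N w)
    (hN_def : ∀ w, N w = 0 → w = 0)
    (hNE : ∀ w, N w ≤ ‖w‖)
    (K : ℝ) (hK : 1 ≤ K) (hKE : ∀ w, ‖w‖ ≤ K * N w)
    (x y xp : EuclideanSpace ℝ (Fin 2))
    (hxX : N x = 1) (hyX : N y = 1) (hxy : y ≠ x)
    (hxp : ‖xp‖ = 1) (hperp : ⟪x, xp⟫ = 0) (hside : 0 ≤ ⟪xp, y⟫)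
    (v : EuclideanSpace ℝ (Fin 2)) (hv : v = x + xp)
    (hangle : Real.arccos (⟪x, y⟫ / (‖x‖ * ‖y‖)) ≤ Real.arccos K⁻¹) :
    Real.arccos (⟪v - x, y - x⟫ / (‖v - x‖ * ‖y - x‖)) ≤ Real.arccos K⁻¹ :=
  stmt15_general N hN_add hN_smul hNE K hK hKE x y xp hxX hyX hxy hxp hperp hside v hv hangle
end

section
/- Let ‖·‖_X be a norm on ℝ² with B_E ⊆ B_X ⊆ K·B_E, K ≥ 1. The map σ : S_X → S_E, σ(x) = x/‖x‖_E, is a bijection, and it is bi-Lipschitz for the Euclidean induced metrics: for x, y ∈ S_X with angle between them at most arccos(1/K), (1/K²)·‖x−y‖_E ≤ ‖σ(x)−σ(y)‖_E ≤ ‖x−y‖_E. -/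
open Set Real
open scoped RealInnerProductSpace

/-!
Write `x = a • u` and `y = b • v` with `u, v` Euclidean unit vectors, so that `1 ≤ a, b ≤ K`.
The upper bound says that the radial retraction onto the Euclidean unit ball is `1`-Lipschitz
outside the ball. For the lower bound, assume `b ≤ a` and use Hahn–Banach and Riesz to get a
vector `z` with `‖z‖ ≤ 1`, `⟪z, y⟫ = 1` and `⟪z, w⟫ ≤ ‖w‖_X` for all `w`. Then `x` lies on the
origin's side of the hyperplane `⟪z, ·⟫ = 1` through `y`, which is at distance at least `1` from the
origin. Cauchy–Schwarz turns this into `‖x - y‖ ≤ a b ‖u - v‖ ≤ K² ‖u - v‖`.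
-/

open NormedSpace

theorem Seminorm.exists_dual_apply_eq {E : Type*} [AddCommGroup E] [Module ℝ E]
    (p : Seminorm ℝ E) (v : E) : ∃ g : Module.Dual ℝ E, g v = p v ∧ ∀ x, |g x| ≤ p x := by
  have hker (c : ℝ) (hc : c • v = 0) : c • p v = 0 := by
    have : |c| * p v = 0 := by rw [← Real.norm_eq_abs, ← map_smul_eq_mul, hc, map_zero]
    rcases mul_eq_zero.1 this with h | h
    · simp [abs_eq_zero.1 h]
    · simp [h]
  let f := LinearPMap.mkSpanSingleton' (σ := RingHom.id ℝ) v (p v) hker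
  obtain ⟨g, hgf, hgp⟩ := Module.Dual.exists_extension_of_le_seminorm_real f.domain f.toFun
    (p := p) fun ⟨x, hx⟩ => by
      obtain ⟨c, rfl⟩ := Submodule.mem_span_singleton.1 hx
      change f ⟨c • v, hx⟩ ≤ p (c • v)
      rw [LinearPMap.mkSpanSingleton'_apply, map_smul_eq_mul, RingHom.id_apply, smul_eq_mul]
      exact mul_le_mul_of_nonneg_right (le_abs_self c) (apply_nonneg p v)
  exact ⟨g, (hgf ⟨v, Submodule.mem_span_singleton_self v⟩).trans
    (LinearPMap.mkSpanSingleton'_apply_self _ _ _ _), hgp⟩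

theorem Seminorm.bijOn_normalize {E : Type*} [NormedAddCommGroup E] [NormedSpace ℝ E]
    (p : Seminorm ℝ E) (hp : ∀ w, p w = 0 → w = 0) :
    BijOn NormedSpace.normalize {w | p w = 1} (Metric.sphere (0 : E) 1) := by
  have p_normalize (w : E) : p (normalize w) = ‖w‖⁻¹ * p w := by
    rw [NormedSpace.normalize, map_smul_eq_mul, norm_inv, norm_norm]
  refine ⟨fun w hw => ?_, fun x hx y hy hxy => ?_, fun w hw => ?_⟩
  · simpa using norm_normalize (by rintro rfl; simp at hw)
  · have hxy' : ‖x‖ = ‖y‖ := by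
      simpa [p_normalize, show p x = 1 from hx, show p y = 1 from hy] using congrArg p hxy
    rw [← norm_smul_normalize x, ← norm_smul_normalize y, hxy, hxy']
  · have hw1 : ‖w‖ = 1 := by simpa using hw
    have hpw : 0 < p w := (apply_nonneg p w).lt_of_ne' fun h => by simp [hp w h] at hw1
    refine ⟨(p w)⁻¹ • w, ?_, ?_⟩
    · simp [map_smul_eq_mul, abs_of_pos hpw, hpw.ne']
    · rw [normalize_smul_of_pos (inv_pos.2 hpw), normalize_eq_self_of_norm_eq_one hw1]

theorem NormedSpace.mul_norm_normalize_sub_normalize {E : Type*} [NormedAddCommGroup E]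
    [NormedSpace ℝ E] (x y : E) :
    ‖x‖ * ‖y‖ * ‖normalize x - normalize y‖ = ‖‖y‖ • x - ‖x‖ • y‖ := by
  have : ‖y‖ • x - ‖x‖ • y = (‖x‖ * ‖y‖) • (normalize x - normalize y) := by
    rw [smul_sub, mul_comm, mul_smul, norm_smul_normalize, mul_comm, mul_smul, norm_smul_normalize]
  rw [this, norm_smul, norm_mul, norm_norm, norm_norm]

section InnerProductSpace

variable {E : Type*} [NormedAddCommGroup E] [InnerProductSpace ℝ E]

theorem Seminorm.exists_inner_eq_of_le_norm [CompleteSpace E] (p : Seminorm ℝ E)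
    (hp : ∀ w, p w ≤ ‖w‖) (v : E) : ∃ z : E, ‖z‖ ≤ 1 ∧ ⟪z, v⟫ = p v ∧ ∀ w, ⟪z, w⟫ ≤ p w := by
  obtain ⟨g, hgv, hgp⟩ := p.exists_dual_apply_eq v
  let g' := g.mkContinuous 1 fun w => by simpa using (hgp w).trans (hp w)
  refine ⟨(InnerProductSpace.toDual ℝ E).symm g', ?_, ?_, fun w => ?_⟩
  · simpa using g.mkContinuous_norm_le zero_le_one _
  · simpa [InnerProductSpace.toDual_symm_apply, g'] using hgv
  · simpa [InnerProductSpace.toDual_symm_apply, g'] using (le_abs_self _).trans (hgp w)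

theorem norm_sub_sq_le_of_inner_le_one {x y z : E} (hz : ‖z‖ ≤ 1) (hzy : ⟪z, y⟫ = 1)
    (hzx : ⟪z, x⟫ ≤ 1) (hxy : ‖y‖ ^ 2 ≤ ⟪x, y⟫) :
    ‖x - y‖ ^ 2 ≤ ‖x‖ ^ 2 * ‖y‖ ^ 2 - ⟪x, y⟫ ^ 2 := by
  set b := ‖y‖ ^ 2
  set c := ⟪x, y⟫
  -- Cauchy–Schwarz for the components of `z` and `x` orthogonal to `y`, scaled by `‖y‖ ^ 2`.
  have cs := real_inner_mul_inner_self_le (b • z - y) (b • x - c • y)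
  have h1 : ⟪b • z - y, b • x - c • y⟫ = b * (b * ⟪z, x⟫ - c) := by
    simp only [inner_sub_left, inner_sub_right, real_inner_smul_left, real_inner_smul_right]
    rw [hzy, real_inner_comm x y, real_inner_self_eq_norm_sq]
    ring
  have h2 : ⟪b • z - y, b • z - y⟫ = b * (b * ‖z‖ ^ 2 - 1) := by
    simp only [inner_sub_left, inner_sub_right, real_inner_smul_left, real_inner_smul_right]
    rw [hzy, real_inner_comm z y, hzy, real_inner_self_eq_norm_sq, real_inner_self_eq_norm_sq]
    ring
  have h3 : ⟪b • x - c • y, b • x - c • y⟫ = b * (‖x‖ ^ 2 * b - c ^ 2) := by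
    simp only [inner_sub_left, inner_sub_right, real_inner_smul_left, real_inner_smul_right]
    rw [real_inner_comm x y, real_inner_self_eq_norm_sq, real_inner_self_eq_norm_sq]
    ring
  have hb : 0 < b := pow_pos (norm_pos_iff.2 fun h => by simp [h] at hzy) 2
  have hgram : 0 ≤ ‖x‖ ^ 2 * b - c ^ 2 := by
    have := real_inner_mul_inner_self_le x y
    rw [real_inner_self_eq_norm_sq, real_inner_self_eq_norm_sq] at this
    nlinarith
  have hz2 : ‖z‖ ^ 2 ≤ 1 := pow_le_one₀ (norm_nonneg z) hz
  have key : (c - b) ^ 2 ≤ (b - 1) * (‖x‖ ^ 2 * b - c ^ 2) := by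
    refine le_of_mul_le_mul_left ?_ (pow_pos hb 2)
    calc b ^ 2 * (c - b) ^ 2 ≤ b ^ 2 * (c - b * ⟪z, x⟫) ^ 2 := by
          gcongr
          exact mul_le_of_le_one_right hb.le hzx
      _ = (b * (b * ⟪z, x⟫ - c)) ^ 2 := by ring
      _ ≤ b * (b * ‖z‖ ^ 2 - 1) * (b * (‖x‖ ^ 2 * b - c ^ 2)) := by
          rw [← h1, ← h2, ← h3]; nlinarith
      _ ≤ b ^ 2 * ((b - 1) * (‖x‖ ^ 2 * b - c ^ 2)) := by
          nlinarith [mul_nonneg (mul_nonneg (pow_pos hb 3).le (sub_nonneg.2 hz2)) hgram]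
  rw [norm_sub_sq_real]
  nlinarith

theorem NormedSpace.sq_mul_norm_normalize_sub_normalize (x y : E) :
    (‖x‖ * ‖y‖ * ‖normalize x - normalize y‖) ^ 2 = 2 * (‖x‖ * ‖y‖) * (‖x‖ * ‖y‖ - ⟪x, y⟫) := by
  rw [mul_norm_normalize_sub_normalize, norm_sub_sq_real, norm_smul, norm_smul,
    real_inner_smul_left, real_inner_smul_right, norm_norm, norm_norm]
  ring

theorem NormedSpace.norm_normalize_sub_normalize_le {x y : E} (hx : 1 ≤ ‖x‖) (hy : 1 ≤ ‖y‖) :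
    ‖normalize x - normalize y‖ ≤ ‖x - y‖ := by
  have hxy : 1 ≤ ‖x‖ * ‖y‖ := one_le_mul_of_one_le_of_one_le hx hy
  have hc : ⟪x, y⟫ ≤ ‖x‖ * ‖y‖ := real_inner_le_norm x y
  refine le_of_mul_le_mul_left ?_ (by linarith : 0 < ‖x‖ * ‖y‖)
  refine le_of_pow_le_pow_left₀ two_ne_zero (by positivity) ?_
  rw [sq_mul_norm_normalize_sub_normalize, mul_pow, norm_sub_sq_real]
  nlinarith [mul_nonneg (mul_nonneg (by linarith : (0 : ℝ) ≤ ‖x‖ * ‖y‖)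
      (by linarith : (0 : ℝ) ≤ ‖x‖ * ‖y‖)) (sq_nonneg (‖x‖ - ‖y‖)),
    mul_nonneg (mul_nonneg (by linarith : (0 : ℝ) ≤ ‖x‖ * ‖y‖) (sub_nonneg.2 hxy))
      (sub_nonneg.2 hc)]

theorem Seminorm.norm_sub_le_mul_norm_normalize_sub [CompleteSpace E] (p : Seminorm ℝ E)
    (hp : ∀ w, p w ≤ ‖w‖) {x y : E} (hx : p x = 1) (hy : p y = 1) :
    ‖x - y‖ ≤ ‖x‖ * ‖y‖ * ‖normalize x - normalize y‖ := by
  wlog hyx : ‖y‖ ≤ ‖x‖ generalizing x y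
  · rw [norm_sub_rev, mul_comm ‖x‖, norm_sub_rev (normalize x)]
    exact this hy hx (le_of_not_ge hyx)
  obtain ⟨z, hz, hzy, hzp⟩ := p.exists_inner_eq_of_le_norm hp y
  have hy1 : 1 ≤ ‖y‖ := hy ▸ hp y
  have hc : ⟪x, y⟫ ≤ ‖x‖ * ‖y‖ := real_inner_le_norm x y
  refine le_of_pow_le_pow_left₀ two_ne_zero (by positivity) ?_
  rw [sq_mul_norm_normalize_sub_normalize]
  rcases le_or_gt ⟪x, y⟫ (‖y‖ ^ 2) with hc' | hc'
  · rw [norm_sub_sq_real]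
    have hxy : 1 ≤ ‖x‖ * ‖y‖ := one_le_mul_of_one_le_of_one_le (hy1.trans hyx) hy1
    nlinarith [mul_nonneg (sub_nonneg.2 hyx)
        (by nlinarith : (0 : ℝ) ≤ 2 * ‖x‖ * ‖y‖ ^ 2 - ‖x‖ - ‖y‖),
      mul_nonneg (sub_nonneg.2 hxy) (sub_nonneg.2 hc')]
  · have := norm_sub_sq_le_of_inner_le_one hz (hzy.trans hy) (hx ▸ hzp x) hc'.le
    nlinarith [sq_nonneg (‖x‖ * ‖y‖ - ⟪x, y⟫)]

end InnerProductSpace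

theorem stmt18_general (N : EuclideanSpace ℝ (Fin 2) → ℝ)
    (hN_add : ∀ v w, N (v + w) ≤ N v + N w)
    (hN_smul : ∀ (a : ℝ) (w : EuclideanSpace ℝ (Fin 2)), N (a • w) = |a| * N w)
    (hNE : ∀ w, N w ≤ ‖w‖)
    (K : ℝ) (hKE : ∀ w, ‖w‖ ≤ K * N w) :
    Set.BijOn (fun w : EuclideanSpace ℝ (Fin 2) => ‖w‖⁻¹ • w) {w | N w = 1}
        (Metric.sphere (0 : EuclideanSpace ℝ (Fin 2)) 1) ∧
      ∀ x y : EuclideanSpace ℝ (Fin 2), N x = 1 → N y = 1 →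
        Real.arccos (⟪x, y⟫ / (‖x‖ * ‖y‖)) ≤ Real.arccos K⁻¹ →
        (1 / K ^ 2) * ‖x - y‖ ≤ ‖‖x‖⁻¹ • x - ‖y‖⁻¹ • y‖ ∧
          ‖‖x‖⁻¹ • x - ‖y‖⁻¹ • y‖ ≤ ‖x - y‖ := by
  let p : Seminorm ℝ (EuclideanSpace ℝ (Fin 2)) :=
    .of N hN_add fun a w => by rw [hN_smul, Real.norm_eq_abs]
  have hp (w) (hw : p w = 0) : w = 0 :=
    norm_le_zero_iff.1 (by simpa [show N w = 0 from hw] using hKE w)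
  refine ⟨p.bijOn_normalize hp, fun x y hx hy _ => ?_⟩
  have hx1 : 1 ≤ ‖x‖ := hx ▸ hNE x
  have hy1 : 1 ≤ ‖y‖ := hy ▸ hNE y
  have hxK : ‖x‖ ≤ K := by simpa [hx] using hKE x
  have hyK : ‖y‖ ≤ K := by simpa [hy] using hKE y
  refine ⟨?_, norm_normalize_sub_normalize_le hx1 hy1⟩
  rw [one_div_mul_eq_div, div_le_iff₀ (by nlinarith)]
  calc ‖x - y‖ ≤ ‖x‖ * ‖y‖ * ‖normalize x - normalize y‖ :=
        p.norm_sub_le_mul_norm_normalize_sub hNE hx hy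
    _ ≤ K ^ 2 * ‖normalize x - normalize y‖ := by gcongr; nlinarith
    _ = _ := mul_comm _ _

theorem stmt18 (N : EuclideanSpace ℝ (Fin 2) → ℝ)
    (hN_add : ∀ v w, N (v + w) ≤ N v + N w)
    (hN_smul : ∀ (a : ℝ) (w : EuclideanSpace ℝ (Fin 2)), N (a • w) = |a| * N w)
    (hN_def : ∀ w, N w = 0 → w = 0)
    (hNE : ∀ w, N w ≤ ‖w‖)
    (K : ℝ) (hK : 1 ≤ K) (hKE : ∀ w, ‖w‖ ≤ K * N w) :
    Set.BijOn (fun w : EuclideanSpace ℝ (Fin 2) => ‖w‖⁻¹ • w) {w | N w = 1}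
        (Metric.sphere (0 : EuclideanSpace ℝ (Fin 2)) 1) ∧
      ∀ x y : EuclideanSpace ℝ (Fin 2), N x = 1 → N y = 1 →
        Real.arccos (⟪x, y⟫ / (‖x‖ * ‖y‖)) ≤ Real.arccos K⁻¹ →
        (1 / K ^ 2) * ‖x - y‖ ≤ ‖‖x‖⁻¹ • x - ‖y‖⁻¹ • y‖ ∧
          ‖‖x‖⁻¹ • x - ‖y‖⁻¹ • y‖ ≤ ‖x - y‖ :=
  stmt18_general N hN_add hN_smul hNE K hKE
end

section
/- For a convex norm-nonincreasing situation in ℝ²: if ‖·‖_X is a norm with B_E ⊆ B_X, x ∈ S_X ∩ S_E, y ∈ S_X linearly independent from x, then the segment from y to x, extended beyond x, meets the closed Euclidean unit ball only in points of X-norm less than 1 strictly between the two Euclidean intersection points; in particular the line through x and y cannot satisfy ⟨x, y⟩ > 1. -/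
open Set Real
open scoped RealInnerProductSpace

theorem stmt19 (N : EuclideanSpace ℝ (Fin 2) → ℝ)
    (hN_add : ∀ v w, N (v + w) ≤ N v + N w)
    (hN_smul : ∀ (a : ℝ) (w : EuclideanSpace ℝ (Fin 2)), N (a • w) = |a| * N w)
    (hN_def : ∀ w, N w = 0 → w = 0)
    (hNE : ∀ w, N w ≤ ‖w‖)
    (x y : EuclideanSpace ℝ (Fin 2))
    (hxX : N x = 1) (hxE : ‖x‖ = 1) (hyX : N y = 1)
    (hindep : LinearIndependent ℝ ![x, y]) :
    (∀ t : ℝ, ‖(1 - t) • y + t • x‖ < 1 → N ((1 - t) • y + t • x) < 1) ∧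
      ⟪x, y⟫ ≤ 1 := by
  constructor
  · intro t ht
    exact lt_of_le_of_lt (hNE _) ht
  · by_contra h
    push_neg at h
    set c : ℝ := ⟪x, y⟫ with hc
    set K : ℝ := 1 - 2 * c + ‖y‖ ^ 2 with hK
    set s : ℝ := (c - 1) / (1 + |K|) with hs
    have hKpos : (0:ℝ) < 1 + |K| := by positivity
    have hspos : 0 < s := div_pos (by linarith) hKpos
    have hseq : s * (1 + |K|) = c - 1 := div_mul_cancel₀ _ (ne_of_gt hKpos)
    set z : EuclideanSpace ℝ (Fin 2) := (1 + s) • x - s • y with hz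
    have hnormz2 : ‖z‖ ^ 2 = (1 + s) ^ 2 - 2 * ((1 + s) * s * c) + s ^ 2 * ‖y‖ ^ 2 := by
      rw [hz, norm_sub_sq_real, norm_smul, norm_smul, real_inner_smul_left,
        real_inner_smul_right, hxE]
      have h1 : ‖(1 + s : ℝ)‖ = 1 + s := by
        rw [Real.norm_eq_abs, abs_of_pos (by linarith)]
      have h2 : ‖(s : ℝ)‖ = s := by
        rw [Real.norm_eq_abs, abs_of_pos hspos]
      rw [h1, h2]
      ring
    have hKabs : K ≤ |K| := le_abs_self K
    have hz2lt : ‖z‖ ^ 2 < 1 := by nlinarith [hspos, hseq, hKabs, abs_nonneg K]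
    have hzlt : ‖z‖ < 1 := by nlinarith [norm_nonneg z]
    have hNz : N z < 1 := lt_of_le_of_lt (hNE z) hzlt
    have hxcomb : x = (1 / (1 + s)) • z + (s / (1 + s)) • y := by
      rw [hz, smul_sub, smul_smul, smul_smul]
      have h1s : (1 + s) ≠ 0 := by linarith
      rw [div_mul_cancel₀ _ h1s]
      module
    have hNx : N x ≤ (1 / (1 + s)) * N z + (s / (1 + s)) * N y := by
      calc N x = N ((1 / (1 + s)) • z + (s / (1 + s)) • y) := by rw [← hxcomb]
        _ ≤ N ((1 / (1 + s)) • z) + N ((s / (1 + s)) • y) := hN_add _ _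
        _ = (1 / (1 + s)) * N z + (s / (1 + s)) * N y := by
            rw [hN_smul, hN_smul, abs_of_pos (by positivity), abs_of_pos (by positivity)]
    rw [hxX, hyX] at hNx
    have h1s : (0:ℝ) < 1 + s := by linarith
    have : (1 / (1 + s)) * N z + (s / (1 + s)) * 1 < 1 := by
      rw [show (1 / (1 + s)) * N z + (s / (1 + s)) * 1 = (N z + s) / (1 + s) by ring,
        div_lt_one h1s]
      linarith
    linarith
end
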